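/- arXiv:1907.07903 — 11 statements merged into one kernel-verified Lean document; each statement's English description precedes it below -/
import Mathlib

section
/- Every element of the projective special linear group PSL(2,ℝ) (the quotient of the special linear group SL(2,ℝ) of 2×2 real matrices of determinant 1 by its center) is a commutator; that is, for every g in SL(2,ℝ)/Z(SL(2,ℝ)) there exist a, b in this quotient group with g = a*b*a⁻¹*b⁻¹. In particular PSL(2,ℝ) is uniformly perfect. -/
/-!
A non-scalar `2 × 2` matrix `A` has a cyclic vector `v`, and in the basis `(v, A v)` it becomes
the companion matrix of its characteristic polynomial. Hence two non-scalar matrices with the same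
trace and determinant are conjugate by an invertible matrix, and conjugation by any invertible
matrix is an automorphism of `SL(2, F)`, so it preserves commutators. The commutators
`⁅diag(a, a⁻¹), Y⁆` with `Y = !![1, 1; r, 1 + r]` are non-scalar and have trace
`2 - r (a - a⁻¹)²`, which takes every value as soon as `a² ≠ 1`. So every non-central element of
`SL(2, F)` is a commutator, and the central ones become trivial in `PSL(2, F)`.
-/

namespace Matrix

variable {K : Type*}

def krylov₂ [CommRing K] (A : Matrix (Fin 2) (Fin 2) K) (v : Fin 2 → K) :
    Matrix (Fin 2) (Fin 2) K :=
  !![v 0, (A *ᵥ v) 0; v 1, (A *ᵥ v) 1]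

theorem mul_krylov₂ [CommRing K] (A : Matrix (Fin 2) (Fin 2) K) (v : Fin 2 → K) :
    A * krylov₂ A v = krylov₂ A v * !![0, -A.det; 1, A.trace] := by
  ext i j
  fin_cases i <;> fin_cases j <;>
    simp [krylov₂, mul_apply, det_fin_two, trace_fin_two] <;>
    ring

variable [Field K]

theorem exists_det_krylov₂_ne_zero {A : Matrix (Fin 2) (Fin 2) K}
    (hA : A ∉ Set.range (scalar (Fin 2))) : ∃ v, (krylov₂ A v).det ≠ 0 := by
  by_contra! h
  have hc : A 1 0 = 0 := by simpa [krylov₂] using h ![1, 0]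
  have hb : A 0 1 = 0 := by simpa [krylov₂] using h ![0, 1]
  have hd : A 1 1 = A 0 0 := by
    have := h ![1, 1]
    simp only [krylov₂, det_fin_two_of, mulVec_fin_two, cons_val_zero, cons_val_one, one_mul,
      mul_one] at this
    linear_combination this - hc + hb
  refine hA ⟨A 0 0, ?_⟩
  ext i j
  fin_cases i <;> fin_cases j <;> simp [hb, hc, hd]

theorem isConj_companion_of_notMem_range_scalar {A : Matrix (Fin 2) (Fin 2) K}
    (hA : A ∉ Set.range (scalar (Fin 2))) : IsConj !![0, -A.det; 1, A.trace] A := by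
  obtain ⟨v, hv⟩ := exists_det_krylov₂_ne_zero hA
  have hunit : IsUnit (krylov₂ A v) := (isUnit_iff_isUnit_det _).mpr hv.isUnit
  exact ⟨hunit.unit, (mul_krylov₂ A v).symm⟩

theorem isConj_of_trace_eq_of_det_eq {A B : Matrix (Fin 2) (Fin 2) K}
    (hA : A ∉ Set.range (scalar (Fin 2))) (hB : B ∉ Set.range (scalar (Fin 2)))
    (htr : A.trace = B.trace) (hdet : A.det = B.det) : IsConj A B := by
  have hconj := isConj_companion_of_notMem_range_scalar hB
  rw [← htr, ← hdet] at hconj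
  exact (isConj_comm.mp (isConj_companion_of_notMem_range_scalar hA)).trans hconj

end Matrix

namespace Matrix.SpecialLinearGroup

open scoped MatrixGroups commutatorElement

variable {n R : Type*} [Fintype n] [DecidableEq n] [CommRing R]

def conjUnit (P : (Matrix n n R)ˣ) : SpecialLinearGroup n R →* SpecialLinearGroup n R where
  toFun A := ⟨P * A * P⁻¹, by rw [det_units_conj, det_coe]⟩
  map_one' := Subtype.ext <| by simp
  map_mul' A B := Subtype.ext <| by
    change (P : Matrix n n R) * (A * B) * (P⁻¹ : (Matrix n n R)ˣ) =
      P * A * (P⁻¹ : (Matrix n n R)ˣ) * (P * B * (P⁻¹ : (Matrix n n R)ˣ))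
    simp only [mul_assoc, Units.inv_mul_cancel_left]

@[simp]
theorem coe_conjUnit (P : (Matrix n n R)ˣ) (A : SpecialLinearGroup n R) :
    (conjUnit P A : Matrix n n R) = P * A * P⁻¹ :=
  rfl

theorem mem_commutatorSet_of_isConj {A B : SpecialLinearGroup n R}
    (hconj : IsConj (B : Matrix n n R) A) (hB : B ∈ commutatorSet (SpecialLinearGroup n R)) :
    A ∈ commutatorSet (SpecialLinearGroup n R) := by
  obtain ⟨P, hP⟩ := hconj
  obtain ⟨X, Y, rfl⟩ := mem_commutatorSet_iff.mp hB
  have hA : conjUnit P ⁅X, Y⁆ = A := Subtype.ext <| by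
    rw [coe_conjUnit, hP.eq, Units.mul_inv_cancel_right]
  exact mem_commutatorSet_iff.mpr ⟨conjUnit P X, conjUnit P Y, by rw [← map_commutatorElement, hA]⟩

variable {F : Type*} [Field F]

theorem coe_notMem_range_scalar_of_notMem_center {A : SL(2, F)}
    (hA : A ∉ Subgroup.center SL(2, F)) :
    (A : Matrix (Fin 2) (Fin 2) F) ∉ Set.range (scalar (Fin 2)) := by
  rintro ⟨r, hr⟩
  refine hA (mem_center_iff.mpr ⟨r, ?_, hr⟩)
  simpa [← hr, det_fin_two, sq] using A.det_coe

theorem coe_commutator_diag2 {a : F} (ha : a ≠ 0) {r : F} {Y : SL(2, F)}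
    (hY : (Y : Matrix (Fin 2) (Fin 2) F) = !![1, 1; r, 1 + r]) :
    ((⁅diag2 a ha, Y⁆ : SL(2, F)) : Matrix (Fin 2) (Fin 2) F) =
      !![1 + r - a ^ 2 * r, a ^ 2 - 1; r * (1 + r) * (a⁻¹ ^ 2 - 1), 1 + r - a⁻¹ ^ 2 * r] := by
  rw [commutatorElement_def, coe_mul, coe_mul, coe_mul, coe_inv, coe_inv, diag2_coe', hY,
    adjugate_fin_two_of, adjugate_fin_two_of]
  ext i j
  fin_cases i <;> fin_cases j <;> simp [Matrix.mul_apply, Fin.sum_univ_two] <;> field_simp <;> ring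

theorem exists_commutator_trace_eq {a : F} (ha : a ≠ 0) (hasq : a ^ 2 ≠ 1) (t : F) :
    ∃ X Y : SL(2, F), ((⁅X, Y⁆ : SL(2, F)) : Matrix (Fin 2) (Fin 2) F).trace = t ∧
      ((⁅X, Y⁆ : SL(2, F)) : Matrix (Fin 2) (Fin 2) F) ∉ Set.range (scalar (Fin 2)) := by
  obtain ⟨r, hr⟩ : ∃ r : F, r * (a ^ 2 - 1) ^ 2 = (2 - t) * a ^ 2 :=
    ⟨_, div_mul_cancel₀ _ (pow_ne_zero 2 (sub_ne_zero.mpr hasq))⟩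
  let Y : SL(2, F) := ⟨!![1, 1; r, 1 + r], by simp [det_fin_two_of]⟩
  have hK := coe_commutator_diag2 ha (Y := Y) rfl
  refine ⟨diag2 a ha, Y, ?_, ?_⟩
  · rw [hK, trace_fin_two_of]
    field_simp
    linear_combination -hr
  · rintro ⟨s, hs⟩
    have h01 : 0 = a ^ 2 - 1 := by simpa [hK] using congrFun (congrFun hs 0) 1
    exact hasq (sub_eq_zero.mp h01.symm)

theorem SL2_mem_commutatorSet_of_notMem_center {a : F} (ha : a ≠ 0) (hasq : a ^ 2 ≠ 1)
    {A : SL(2, F)} (hA : A ∉ Subgroup.center SL(2, F)) : A ∈ commutatorSet SL(2, F) := by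
  obtain ⟨X, Y, htr, hK⟩ := exists_commutator_trace_eq ha hasq (A : Matrix (Fin 2) (Fin 2) F).trace
  refine mem_commutatorSet_of_isConj (B := ⁅X, Y⁆) ?_ ⟨X, Y, rfl⟩
  exact isConj_of_trace_eq_of_det_eq hK (coe_notMem_range_scalar_of_notMem_center hA) htr
    (by rw [det_coe, det_coe])

end Matrix.SpecialLinearGroup

/-- Every element of PSL(2,ℝ), the quotient of SL(2,ℝ) by its center,
is a commutator. -/
theorem psl2r_every_element_is_commutator
    (g : Matrix.SpecialLinearGroup (Fin 2) ℝ ⧸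
      Subgroup.center (Matrix.SpecialLinearGroup (Fin 2) ℝ)) :
    ∃ a b : Matrix.SpecialLinearGroup (Fin 2) ℝ ⧸
      Subgroup.center (Matrix.SpecialLinearGroup (Fin 2) ℝ),
      g = a * b * a⁻¹ * b⁻¹ := by
  obtain ⟨A, rfl⟩ := QuotientGroup.mk_surjective g
  by_cases hA : A ∈ Subgroup.center (Matrix.SpecialLinearGroup (Fin 2) ℝ)
  · exact ⟨1, 1, by simpa using (QuotientGroup.eq_one_iff A).mpr hA⟩
  · obtain ⟨X, Y, hXY⟩ := mem_commutatorSet_iff.mp <|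
      Matrix.SpecialLinearGroup.SL2_mem_commutatorSet_of_notMem_center (a := (2 : ℝ))
        two_ne_zero (by norm_num) hA
    exact ⟨X, Y, by rw [← hXY, commutatorElement_def]; rfl⟩
end

section
/- The circle group ℝ/ℤ, considered as an abstract additive group, is isomorphic to the direct sum of ℚ/ℤ with a direct sum of copies of ℚ indexed by a set of cardinality continuum; concretely, there is an additive group isomorphism AddCircle (1:ℝ) ≃+ AddCircle (1:ℚ) × (ℝ →₀ ℚ). -/
/-!
Over ℚ, the reals split as `ℚ ∙ 1 ⊕ W` for a complement `W`, whose dimension is again the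
continuum, so `W ≃ ℝ →₀ ℚ`. The subgroup `ℤ` lies in the line `ℚ ∙ 1`, so quotienting by it
only affects the first summand, turning it into `ℚ/ℤ`.
-/

open Cardinal

universe u

theorem AddSubgroup.zmultiples_prod_zero {H W : Type*} [AddCommGroup H] [AddCommGroup W] (a : H) :
    AddSubgroup.zmultiples ((a, 0) : H × W) = (AddSubgroup.zmultiples a).prod ⊥ := by
  ext ⟨x, y⟩
  simp [AddSubgroup.mem_zmultiples_iff, AddSubgroup.mem_prod, Prod.ext_iff, eq_comm]

def AddEquiv.quotientZMultiplesEquivProd {G H W : Type*} [AddCommGroup G] [AddCommGroup H]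
    [AddCommGroup W] (e : G ≃+ H × W) {g : G} {a : H} (he : e g = (a, 0)) :
    G ⧸ AddSubgroup.zmultiples g ≃+ (H ⧸ AddSubgroup.zmultiples a) × W :=
  (QuotientAddGroup.congr _ _ e <| by
      rw [AddMonoidHom.map_zmultiples, AddMonoidHom.coe_coe, he,
        AddSubgroup.zmultiples_prod_zero]).trans <|
    (QuotientAddGroup.prodAddEquiv _ _).trans <|
      (AddEquiv.refl _).prodCongr QuotientAddGroup.quotientBot

theorem Submodule.exists_linearEquiv_prod_of_ne_zero {K V : Type*} [DivisionRing K]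
    [AddCommGroup V] [Module K V] {v : V} (hv : v ≠ 0) :
    ∃ (W : Submodule K V) (e : V ≃ₗ[K] K × W), e v = (1, 0) := by
  obtain ⟨W, hW⟩ := (K ∙ v).exists_isCompl
  refine ⟨W, (((LinearEquiv.toSpanNonzeroSingleton K V v hv).prodCongr (.refl K W)).trans
    (Submodule.prodEquivOfIsCompl _ _ hW)).symm, ?_⟩
  rw [LinearEquiv.symm_apply_eq]
  simp

theorem rank_eq_of_linearEquiv_prod {K V W : Type u} [DivisionRing K] [AddCommGroup V]
    [Module K V] [AddCommGroup W] [Module K W] (e : V ≃ₗ[K] K × W)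
    (hV : ℵ₀ ≤ Module.rank K V) : Module.rank K W = Module.rank K V :=
  eq_of_add_eq_of_aleph0_le (by rw [e.rank_eq, rank_prod', Module.rank_self])
    (one_lt_aleph0.trans_le hV) hV

/-- The circle group ℝ/ℤ, as an abstract additive group, is isomorphic to the
direct sum of ℚ/ℤ with continuum many copies of ℚ. -/
theorem addCircle_iso_ratCircle_prod_finsupp :
    Nonempty (AddCircle (1 : ℝ) ≃+ (AddCircle (1 : ℚ) × (ℝ →₀ ℚ))) := by
  obtain ⟨W, e, he⟩ := Submodule.exists_linearEquiv_prod_of_ne_zero (K := ℚ) (one_ne_zero' ℝ)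
  have hW : Module.rank ℚ W = Module.rank ℚ (ℝ →₀ ℚ) := by
    rw [rank_eq_of_linearEquiv_prod e (Real.rank_rat_real ▸ aleph0_le_continuum),
      Real.rank_rat_real, rank_finsupp_self', mk_real]
  obtain ⟨f⟩ := nonempty_linearEquiv_of_rank_eq hW
  exact ⟨(e.toAddEquiv.quotientZMultiplesEquivProd he).trans
    ((AddEquiv.refl _).prodCongr f.toAddEquiv)⟩
end

section
/- Every homogeneous quasimorphism on a uniformly perfect group vanishes identically: let G be a group and N a natural number such that every element of G can be written as a product of at most N commutators, and let f : G → ℝ satisfy (i) there is a constant D ≥ 0 with |f(g*h) − f(g) − f(h)| ≤ D for all g, h ∈ G, and (ii) f(g^n) = n * f(g) for all g ∈ G and all natural numbers n. Then f(g) = 0 for every g ∈ G. -/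
/-!
A homogeneous quasimorphism is constant on conjugacy classes and odd, because the errors
`f (h g h⁻¹) - f g` and `f g + f g⁻¹` become `n` times larger on passing to `gⁿ` while staying
bounded by a multiple of the defect. Hence `f ⁅a, b⁆ = f (a b a⁻¹) + f b⁻¹` up to the defect `D`,
so `|f ⁅a, b⁆| ≤ D`, and `f` is bounded by `2 N D` on a group in which every element is a product
of `N` commutators. A bounded homogeneous function vanishes, since `n |f g| = |f (gⁿ)|`.
-/

open scoped commutatorElement

theorem eq_zero_of_forall_nat_mul_abs_le {K : Type*} [Field K] [LinearOrder K]
    [IsStrictOrderedRing K] [Archimedean K] {x C : K} (h : ∀ n : ℕ, n * |x| ≤ C) : x = 0 := by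
  by_contra hx
  obtain ⟨n, hn⟩ := exists_nat_gt (C / |x|)
  rw [div_lt_iff₀ (abs_pos.mpr hx)] at hn
  linarith [h n]

section Quasimorphism

variable {G : Type*} [Group G]

def IsQuasimorphism (f : G → ℝ) (D : ℝ) : Prop :=
  ∀ g h : G, |f (g * h) - f g - f h| ≤ D

def IsPowHomogeneous (f : G → ℝ) : Prop :=
  ∀ (g : G) (n : ℕ), f (g ^ n) = n * f g

variable {f : G → ℝ} {D : ℝ}

namespace IsPowHomogeneous

theorem map_one (hf : IsPowHomogeneous f) : f 1 = 0 := by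
  simpa using hf 1 0

theorem eq_zero_of_abs_le (hf : IsPowHomogeneous f) {C : ℝ} (hC : ∀ g, |f g| ≤ C) (g : G) :
    f g = 0 :=
  eq_zero_of_forall_nat_mul_abs_le fun n => by
    simpa [hf g n, abs_mul] using hC (g ^ n)

theorem map_inv (hf : IsPowHomogeneous f) (hq : IsQuasimorphism f D) (g : G) :
    f g⁻¹ = -f g := by
  suffices f g + f g⁻¹ = 0 by linarith
  refine eq_zero_of_forall_nat_mul_abs_le (C := D) fun n => ?_
  have h := hq (g ^ n) (g⁻¹ ^ n)
  rw [inv_pow, mul_inv_cancel, hf.map_one, hf, ← inv_pow, hf] at h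
  calc (n : ℝ) * |f g + f g⁻¹| = |0 - n * f g - n * f g⁻¹| := by
        rw [sub_sub, zero_sub, abs_neg, ← mul_add, abs_mul, Nat.abs_cast]
    _ ≤ D := h

theorem map_conj (hf : IsPowHomogeneous f) (hq : IsQuasimorphism f D) (g h : G) :
    f (h * g * h⁻¹) = f g := by
  suffices f (h * g * h⁻¹) - f g = 0 by linarith
  refine eq_zero_of_forall_nat_mul_abs_le (C := D + D) fun n => ?_
  have h₁ := abs_le.mp (hq (h * g ^ n) h⁻¹)
  have h₂ := abs_le.mp (hq h (g ^ n))
  rw [← conj_pow, hf, hf.map_inv hq] at h₁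
  rw [hf] at h₂
  rw [← Nat.abs_cast n, ← abs_mul, abs_le]
  constructor <;> linarith

theorem abs_map_commutator_le (hf : IsPowHomogeneous f) (hq : IsQuasimorphism f D) (a b : G) :
    |f ⁅a, b⁆| ≤ D := by
  have h := hq (a * b * a⁻¹) b⁻¹
  rwa [hf.map_conj hq, hf.map_inv hq, ← commutatorElement_def, sub_neg_eq_add, sub_add_cancel]
    at h

end IsPowHomogeneous

theorem IsQuasimorphism.abs_map_list_prod_le (hq : IsQuasimorphism f D) (h₁ : f 1 = 0)
    {C : ℝ} {l : List G} (hl : ∀ x ∈ l, |f x| ≤ C) : |f l.prod| ≤ l.length * (C + D) := by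
  induction l with
  | nil => simp [h₁]
  | cons a t ih =>
    have ht := abs_le.mp (ih fun x hx => hl x (List.mem_cons_of_mem a hx))
    have ha := abs_le.mp (hl a List.mem_cons_self)
    have hat := abs_le.mp (hq a t.prod)
    rw [List.prod_cons, List.length_cons, Nat.cast_succ, abs_le]
    constructor <;> linarith

end Quasimorphism

/-- Every homogeneous quasimorphism on a uniformly perfect group vanishes
identically. -/
theorem homogeneous_quasimorphism_vanishes_on_uniformly_perfect_group
    {G : Type*} [Group G] (N : ℕ)
    (hperf : ∀ g : G, ∃ l : List (G × G), l.length ≤ N ∧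
      g = (l.map fun p => ⁅p.1, p.2⁆).prod)
    (f : G → ℝ) (D : ℝ) (hD : 0 ≤ D)
    (hquasi : ∀ g h : G, |f (g * h) - f g - f h| ≤ D)
    (hhom : ∀ (g : G) (n : ℕ), f (g ^ n) = n * f g) :
    ∀ g : G, f g = 0 := by
  have hf : IsPowHomogeneous f := hhom
  have hq : IsQuasimorphism f D := hquasi
  refine hf.eq_zero_of_abs_le (C := N * (D + D)) fun g => ?_
  obtain ⟨l, hlen, rfl⟩ := hperf g
  have hcomm : ∀ x ∈ l.map fun p => ⁅p.1, p.2⁆, |f x| ≤ D := by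
    simp only [List.forall_mem_map]
    exact fun p _ => hf.abs_map_commutator_le hq p.1 p.2
  calc |f _| ≤ (l.map fun p => ⁅p.1, p.2⁆).length * (D + D) :=
        hq.abs_map_list_prod_le hf.map_one hcomm
    _ ≤ N * (D + D) := by
        rw [List.length_map]
        gcongr
end

section
/- Poincaré's translation number is a quasimorphism of defect at most 1 on the monoid of degree-one monotone circle lifts: for all f, g : CircleDeg1Lift, one has |τ(f * g) − τ(f) − τ(g)| ≤ 1, where τ denotes the translation number. -/
/-!
If `τ f < n` for an integer `n`, then `f x < x + n` for every `x`, so `f * g` lies below the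
composition of `g` with the integer translation by `n`. That translation commutes with `g`, so
the translation number of the latter is `n + τ g`, and monotonicity of `τ` gives
`τ (f * g) ≤ n + τ g`. Taking `n = ⌊τ f⌋ + 1`, and symmetrically `n = ⌈τ f⌉ - 1` from below,
yields `τ f + τ g - 1 ≤ τ (f * g) ≤ τ f + τ g + 1`.
-/

open CircleDeg1Lift

local notation "τ" => translationNumber

namespace CircleDeg1Lift

variable (f g : CircleDeg1Lift) (n : ℤ)

lemma commute_translate_int :
    Commute (translate (Multiplicative.ofAdd (n : ℝ)) : CircleDeg1Lift) g := by
  ext x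
  simp [mul_apply, translate_apply, g.map_int_add]

lemma translationNumber_translate_int_mul :
    τ (translate (Multiplicative.ofAdd (n : ℝ)) * g) = n + τ g := by
  rw [translationNumber_mul_of_commute (commute_translate_int g n), translationNumber_translate]

lemma translationNumber_mul_le_of_le_add_int (h : ∀ x, f x ≤ x + n) :
    τ (f * g) ≤ n + τ g := by
  rw [← translationNumber_translate_int_mul]
  refine translationNumber_mono fun x => ?_
  rw [mul_apply, mul_apply, translate_apply, add_comm]
  exact h (g x)

lemma le_translationNumber_mul_of_add_int_le (h : ∀ x, x + n ≤ f x) :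
    n + τ g ≤ τ (f * g) := by
  rw [← translationNumber_translate_int_mul]
  refine translationNumber_mono fun x => ?_
  rw [mul_apply, mul_apply, translate_apply, add_comm]
  exact h (g x)

end CircleDeg1Lift

/-- Poincaré's translation number is a quasimorphism of defect at most 1 on the
monoid of degree-one monotone circle lifts. -/
theorem translationNumber_quasimorphism_defect_le_one
    (f g : CircleDeg1Lift) :
    |CircleDeg1Lift.translationNumber (f * g) -
      CircleDeg1Lift.translationNumber f -
      CircleDeg1Lift.translationNumber g| ≤ 1 := by
  have upper := translationNumber_mul_le_of_le_add_int f g (⌊τ f⌋ + 1) fun x =>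
    (f.map_lt_of_translationNumber_lt_int (by exact_mod_cast Int.lt_floor_add_one (τ f)) x).le
  have lower := le_translationNumber_mul_of_add_int_le f g (⌈τ f⌉ - 1) fun x =>
    (f.lt_map_of_int_lt_translationNumber
      (by push_cast; linarith [Int.ceil_lt_add_one (τ f)]) x).le
  have floor_le : (⌊τ f⌋ : ℝ) ≤ τ f := Int.floor_le _
  have le_ceil : τ f ≤ (⌈τ f⌉ : ℝ) := Int.le_ceil _
  push_cast at upper lower
  rw [abs_le]
  constructor <;> linarith
end

section
/- If G is a uniformly perfect group, i.e. there is N : ℕ such that every element of G is a product of at most N commutators, then for any group homomorphism ρ : G →* CircleDeg1Liftˣ into the group of invertible degree-one monotone circle lifts, the translation number of ρ(g) is 0 for every g ∈ G. -/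
/-!
The translation number is a homogeneous quasi-morphism: `τ (f * g) ≤ τ f + τ g + 2`,
`τ (f ^ n) = n * τ f`, and `τ` is invariant under conjugation. Hence `τ ≤ 2` on commutators,
so a product of at most `N` commutators has `τ ≤ 4 N`. In a uniformly perfect group this
applies to every power `g ^ n`, giving `n * τ (ρ g) ≤ 4 N` for all `n`, i.e. `τ (ρ g) ≤ 0`;
applying this to `g⁻¹` as well gives `τ (ρ g) = 0`.
-/

open CircleDeg1Lift
open scoped commutatorElement

local notation "τ" => translationNumber

theorem nonpos_of_forall_nsmul_le {α : Type*} [AddCommGroup α] [LinearOrder α]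
    [IsOrderedAddMonoid α] [Archimedean α] {x C : α} (h : ∀ n : ℕ, n • x ≤ C) : x ≤ 0 := by
  by_contra! hx
  obtain ⟨n, hn⟩ := Archimedean.arch C hx
  have := h (n + 1)
  rw [succ_nsmul] at this
  exact (lt_add_of_le_of_pos hn hx).not_ge this

namespace CircleDeg1Lift

theorem translationNumber_mul_le (f g : CircleDeg1Lift) :
    τ (f * g) ≤ τ f + τ g + 2 := by
  refine translationNumber_le_of_le_add _ fun x => ?_
  have hf := f.map_lt_add_translationNumber_add_one (g x)
  have hg := g.map_lt_add_translationNumber_add_one x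
  rw [mul_apply]
  linarith

theorem translationNumber_commutatorElement_le (a b : CircleDeg1Liftˣ) :
    τ (⁅a, b⁆ : CircleDeg1Liftˣ) ≤ 2 := by
  have hconj : τ (a * b * a⁻¹ : CircleDeg1Liftˣ) = τ b := translationNumber_conj_eq a b
  have := translationNumber_mul_le (a * b * a⁻¹ : CircleDeg1Liftˣ) (b⁻¹ : CircleDeg1Liftˣ)
  rw [← Units.val_mul, ← commutatorElement_def, hconj, translationNumber_units_inv] at this
  linarith

theorem translationNumber_map_prod_commutatorElement_le {G : Type*} [Group G]
    (ρ : G →* CircleDeg1Liftˣ) (l : List (G × G)) :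
    τ (ρ (l.map fun p => ⁅p.1, p.2⁆).prod) ≤ 4 * l.length := by
  induction l with
  | nil => simp
  | cons p l ih =>
    have hcomm := translationNumber_commutatorElement_le (ρ p.1) (ρ p.2)
    have hmul := translationNumber_mul_le (ρ ⁅p.1, p.2⁆) (ρ (l.map fun p => ⁅p.1, p.2⁆).prod)
    rw [← map_commutatorElement] at hcomm
    rw [List.map_cons, List.prod_cons, map_mul, Units.val_mul, List.length_cons, Nat.cast_succ]
    linarith

end CircleDeg1Lift

/-- For any action of a uniformly perfect group by invertible degree-one
monotone circle lifts, every element has translation number zero. -/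
theorem translationNumber_eq_zero_of_uniformly_perfect
    {G : Type*} [Group G] (N : ℕ)
    (hperf : ∀ g : G, ∃ l : List (G × G), l.length ≤ N ∧
      g = (l.map fun p => ⁅p.1, p.2⁆).prod)
    (ρ : G →* CircleDeg1Liftˣ) :
    ∀ g : G, CircleDeg1Lift.translationNumber ((ρ g : CircleDeg1Liftˣ) : CircleDeg1Lift) = 0 := by
  have hbounded : ∀ g : G, τ (ρ g) ≤ 4 * N := fun g => by
    obtain ⟨l, hl, rfl⟩ := hperf g
    calc τ (ρ (l.map fun p => ⁅p.1, p.2⁆).prod) ≤ 4 * l.length :=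
          translationNumber_map_prod_commutatorElement_le ρ l
      _ ≤ 4 * N := by gcongr
  have hnonpos : ∀ g : G, τ (ρ g) ≤ 0 := fun g =>
    nonpos_of_forall_nsmul_le fun n => by
      simpa [nsmul_eq_mul] using hbounded (g ^ n)
  intro g
  have hinv := hnonpos g⁻¹
  rw [map_inv, translationNumber_units_inv] at hinv
  linarith [hnonpos g]
end

section
/- A lifted action of a uniformly perfect group on the real line has a global fixed point: if G is a group such that every element of G is a product of at most N commutators for some fixed N : ℕ, and ρ : G →* CircleDeg1Liftˣ is any group homomorphism into the group of invertible degree-one monotone circle lifts, then there exists x ∈ ℝ with (ρ g)(x) = x for every g ∈ G. -/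
open scoped commutatorElement

/-!
A commutator `⁅a, b⁆ = (a b a⁻¹) b⁻¹` of degree-one lifts is the product of a conjugate of `b`
and of `b⁻¹`, whose translation numbers cancel; since a lift `f` moves every point by less than
`τ f + 1`, a commutator moves points less than `2` to the right. In a uniformly perfect group every
`ρ g` therefore moves points at most `2 N` to the right, so the orbit of `0` is bounded above, and
its supremum is fixed by the whole group because each `ρ h` is an order automorphism permuting
that orbit.
-/

theorem OrderIso.exists_forall_apply_eq_of_bddAbove_orbit {G α : Type*} [Group G]
    [ConditionallyCompleteLattice α] (ρ : G →* α ≃o α) (x₀ : α)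
    (hbdd : BddAbove (Set.range fun g => ρ g x₀)) :
    ∃ x : α, ∀ g : G, ρ g x = x := by
  refine ⟨⨆ g, ρ g x₀, fun h => ?_⟩
  rw [OrderIso.map_ciSup _ hbdd]
  simp only [← RelIso.mul_apply, ← map_mul]
  exact (mul_left_surjective h).iSup_comp fun g => ρ g x₀

namespace CircleDeg1Lift

theorem commutator_apply_lt (a b : CircleDeg1Liftˣ) (x : ℝ) :
    ((⁅a, b⁆ : CircleDeg1Liftˣ) : CircleDeg1Lift) x < x + 2 := by
  have hconj : ((⁅a, b⁆ : CircleDeg1Liftˣ) : CircleDeg1Lift) x =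
      ((a : CircleDeg1Lift) * b * ↑a⁻¹) ((b⁻¹ : CircleDeg1Liftˣ) x) := by
    simp [commutatorElement_def, mul_assoc, mul_apply]
  have hfirst := map_lt_add_translationNumber_add_one
    ((a : CircleDeg1Lift) * b * ↑a⁻¹) ((b⁻¹ : CircleDeg1Liftˣ) x)
  have hsecond := map_lt_add_translationNumber_add_one ((b⁻¹ : CircleDeg1Liftˣ) : CircleDeg1Lift) x
  rw [translationNumber_conj_eq] at hfirst
  rw [translationNumber_units_inv] at hsecond
  linarith

theorem apply_prod_commutators_le {G : Type*} [Group G] (ρ : G →* CircleDeg1Liftˣ)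
    (l : List (G × G)) (x : ℝ) :
    ((ρ (l.map fun p => ⁅p.1, p.2⁆).prod : CircleDeg1Liftˣ) : CircleDeg1Lift) x ≤
      x + 2 * l.length := by
  induction l with
  | nil => simp
  | cons p l ih =>
    have hcomm := commutator_apply_lt (ρ p.1) (ρ p.2)
      ((ρ (l.map fun p => ⁅p.1, p.2⁆).prod : CircleDeg1Liftˣ) x)
    simp only [List.map_cons, List.prod_cons, map_mul, map_commutatorElement, Units.val_mul,
      mul_apply, List.length_cons, Nat.cast_succ] at hcomm ⊢
    linarith

end CircleDeg1Lift

/-- A lifted action of a uniformly perfect group on the real line has a global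
fixed point. -/
theorem lifted_action_of_uniformly_perfect_has_fixed_point
    {G : Type*} [Group G] (N : ℕ)
    (hperf : ∀ g : G, ∃ l : List (G × G), l.length ≤ N ∧
      g = (l.map fun p => ⁅p.1, p.2⁆).prod)
    (ρ : G →* CircleDeg1Liftˣ) :
    ∃ x : ℝ, ∀ g : G, ((ρ g : CircleDeg1Liftˣ) : CircleDeg1Lift) x = x := by
  have horbit : BddAbove (Set.range fun g => CircleDeg1Lift.toOrderIso.comp ρ g 0) := by
    refine ⟨2 * N, ?_⟩
    rintro _ ⟨g, rfl⟩
    obtain ⟨l, hlen, rfl⟩ := hperf g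
    have hmove := CircleDeg1Lift.apply_prod_commutators_le ρ l 0
    have hlen' : (l.length : ℝ) ≤ N := by exact_mod_cast hlen
    simp only [MonoidHom.comp_apply, CircleDeg1Lift.coe_toOrderIso]
    linarith
  exact OrderIso.exists_forall_apply_eq_of_bddAbove_orbit _ 0 horbit
end

section
/- (Ghys) Let G be a group such that (i) every element of G is a product of at most N commutators for some fixed N : ℕ, and (ii) the second group cohomology of G with coefficients in the trivial G-representation ℤ vanishes. Then every action of G on the circle ℝ/ℤ by orientation-preserving homeomorphisms has a global fixed point: for every group homomorphism ρ : G →* Homeomorph (AddCircle (1:ℝ)) (AddCircle (1:ℝ)) such that each ρ(g) preserves the betweenness relation btw of the circular order on AddCircle (1:ℝ), there exists a point x with (ρ g)(x) = x for all g ∈ G. -/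
/-!
Every orientation-preserving homeomorphism of `ℝ/ℤ` lifts to a homeomorphism of `ℝ` commuting with
integer translations, and two lifts of the same map differ by an integer translation. Hence lifts
`ℓ g` of `ρ g` satisfy `ℓ g ∘ ℓ h = ℓ (g h) + c(g, h)` for a 2-cocycle `c : G × G → ℤ`; since
`H²(G; ℤ) = 0` it is a coboundary, and correcting the lifts by it gives an action of `G` on `ℝ` by
lifts. The translation number is a homogeneous quasimorphism on `G`, so it is bounded by a multiple
of `N` on the uniformly perfect group `G`, hence zero. An action on `ℝ` by lifts with vanishing
translation numbers is semiconjugate to the trivial action (Ghys), which yields a common fixed point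
on `ℝ`; its image in `ℝ/ℤ` is fixed by `ρ`.
-/

instance homeomorphGroup {X : Type*} [TopologicalSpace X] : Group (X ≃ₜ X) where
  mul f g := g.trans f
  one := Homeomorph.refl X
  inv := Homeomorph.symm
  mul_assoc f g h := Homeomorph.ext fun _ => rfl
  one_mul f := Homeomorph.ext fun _ => rfl
  mul_one f := Homeomorph.ext fun _ => rfl
  inv_mul_cancel f := Homeomorph.ext fun x => f.symm_apply_apply x

open scoped commutatorElement

open Function Set CircleDeg1Lift

noncomputable section

namespace UnitAddCircle

lemma exists_int_eq_add_of_coe_eq {x y : ℝ} (h : (x : UnitAddCircle) = y) :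
    ∃ n : ℤ, y = x + n := by
  obtain ⟨n, hn⟩ := AddSubgroup.mem_zmultiples_iff.1 (QuotientAddGroup.eq.1 h)
  exact ⟨n, by rw [zsmul_one] at hn; linarith⟩

lemma coe_add_intCast (x : ℝ) (n : ℤ) : ((x + n : ℝ) : UnitAddCircle) = x :=
  (QuotientAddGroup.eq.2 (AddSubgroup.mem_zmultiples_iff.2 ⟨n, by simp⟩)).symm

lemma btw_zero_coe_coe {x y : ℝ} (hx : 0 ≤ x) (hxy : x ≤ y) (hy : y < 1) :
    btw ((0 : ℝ) : UnitAddCircle) x y := by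
  rcases hx.eq_or_lt with rfl | hx
  · exact btw_refl_left _ _
  rw [QuotientAddGroup.btw_coe_iff, (toIcoMod_eq_self _).2 ⟨hx.le, by linarith⟩,
    (toIocMod_eq_self _).2 ⟨by linarith, by linarith⟩]
  exact hxy

lemma equivIco_le_of_btw {a : ℝ} {z w : UnitAddCircle} (h : btw (a : UnitAddCircle) z w)
    (hw : w ≠ a) : (AddCircle.equivIco 1 a z : ℝ) ≤ AddCircle.equivIco 1 a w := by
  have hz := (AddCircle.equivIco 1 a z).2
  have hw' := (AddCircle.equivIco 1 a w).2
  have hwa : (AddCircle.equivIco 1 a w : ℝ) ≠ a := fun h ↦ hw (by rw [← h, AddCircle.coe_equivIco])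
  rw [← AddCircle.coe_equivIco (a := a) (y := z), ← AddCircle.coe_equivIco (a := a) (y := w),
    QuotientAddGroup.btw_coe_iff, (toIcoMod_eq_self _).2 hz,
    (toIocMod_eq_self _).2 ⟨lt_of_le_of_ne hw'.1 hwa.symm, hw'.2.le⟩] at h
  exact h

section Lift

variable (f : UnitAddCircle ≃ UnitAddCircle) (y₀ : ℝ)

-- `y₀` is meant to be a representative of `f 0`, which makes `liftFun` monotone on `[0, 1)`.
def liftFun (x : ℝ) : ℝ := AddCircle.equivIco 1 y₀ (f x) + ⌊x⌋

lemma coe_liftFun (x : ℝ) : (liftFun f y₀ x : UnitAddCircle) = f x := by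
  rw [liftFun, coe_add_intCast, AddCircle.coe_equivIco]

lemma liftFun_add_intCast (x : ℝ) (n : ℤ) : liftFun f y₀ (x + n) = liftFun f y₀ x + n := by
  rw [liftFun, liftFun, coe_add_intCast, Int.floor_add_intCast]
  push_cast
  ring

lemma liftFun_mem_Ico (x : ℝ) : liftFun f y₀ x ∈ Ico (y₀ + ⌊x⌋) (y₀ + 1 + ⌊x⌋) := by
  have h := (AddCircle.equivIco 1 y₀ (f x)).2
  exact ⟨by rw [liftFun]; linarith [h.1], by rw [liftFun]; linarith [h.2]⟩

variable {f y₀}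

lemma monotoneOn_liftFun (hf : ∀ a b c, btw a b c → btw (f a) (f b) (f c))
    (hy₀ : (y₀ : UnitAddCircle) = f 0) : MonotoneOn (liftFun f y₀) (Ico 0 1) := by
  rintro x ⟨hx, -⟩ y ⟨-, hy⟩ hxy
  rcases hxy.eq_or_lt with rfl | hxy
  · rfl
  have hfy : f y ≠ y₀ := by
    rw [hy₀, Ne, f.apply_eq_iff_eq, ← QuotientAddGroup.mk_zero,
      AddCircle.coe_eq_coe_iff_of_mem_Ico (a := 0) ⟨by linarith, by linarith⟩ ⟨le_rfl, by norm_num⟩]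
    linarith
  have hbtw := hf _ _ _ (btw_zero_coe_coe hx hxy.le hy)
  rw [QuotientAddGroup.mk_zero, ← hy₀] at hbtw
  simp only [liftFun, Int.floor_eq_zero_iff.2 ⟨hx, by linarith⟩,
    Int.floor_eq_zero_iff.2 ⟨by linarith, hy⟩, Int.cast_zero, add_zero]
  exact equivIco_le_of_btw hbtw hfy

lemma monotone_liftFun (hf : ∀ a b c, btw a b c → btw (f a) (f b) (f c))
    (hy₀ : (y₀ : UnitAddCircle) = f 0) : Monotone (liftFun f y₀) := by
  intro x y hxy
  rcases (Int.floor_le_floor hxy).eq_or_lt with hfloor | hfloor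
  · have hx := liftFun_add_intCast f y₀ (Int.fract x) ⌊x⌋
    have hy := liftFun_add_intCast f y₀ (Int.fract y) ⌊y⌋
    rw [Int.fract_add_floor] at hx hy
    have := monotoneOn_liftFun hf hy₀ ⟨Int.fract_nonneg x, Int.fract_lt_one x⟩
      ⟨Int.fract_nonneg y, Int.fract_lt_one y⟩ (by rw [Int.fract, Int.fract, hfloor]; linarith)
    rw [hx, hy, hfloor]
    linarith
  · have hx := (liftFun_mem_Ico f y₀ x).2
    have hy := (liftFun_mem_Ico f y₀ y).1
    have : (⌊x⌋ : ℝ) + 1 ≤ ⌊y⌋ := by exact_mod_cast hfloor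
    linarith

lemma injective_liftFun : Injective (liftFun f y₀) := by
  intro x y h
  have hxy : (x : UnitAddCircle) = y := f.injective (by rw [← coe_liftFun, ← coe_liftFun, h])
  obtain ⟨n, rfl⟩ := exists_int_eq_add_of_coe_eq hxy
  rw [liftFun_add_intCast, left_eq_add, Int.cast_eq_zero] at h
  simp [h]

lemma surjective_liftFun : Surjective (liftFun f y₀) := by
  intro y
  obtain ⟨x, hx⟩ := QuotientAddGroup.mk_surjective (f.symm y)
  have : (liftFun f y₀ x : UnitAddCircle) = y := by rw [coe_liftFun, hx, f.apply_symm_apply]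
  obtain ⟨n, rfl⟩ := exists_int_eq_add_of_coe_eq this
  exact ⟨x + n, liftFun_add_intCast f y₀ x n⟩

end Lift

theorem exists_unit_semiconj_coe (f : UnitAddCircle ≃ UnitAddCircle)
    (hf : ∀ a b c, btw a b c → btw (f a) (f b) (f c)) :
    ∃ F : CircleDeg1Liftˣ, Semiconj ((↑) : ℝ → UnitAddCircle) F f := by
  obtain ⟨y₀, hy₀⟩ := QuotientAddGroup.mk_surjective (f 0)
  let F : CircleDeg1Lift := ⟨⟨liftFun f y₀, monotone_liftFun hf hy₀⟩,
    fun x ↦ by exact_mod_cast liftFun_add_intCast f y₀ x 1⟩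
  have hF : IsUnit F := isUnit_iff_bijective.2 ⟨injective_liftFun, surjective_liftFun⟩
  exact ⟨hF.unit, coe_liftFun f y₀⟩

end UnitAddCircle

namespace CircleDeg1Lift

def translateOne : CircleDeg1Liftˣ := translate (Multiplicative.ofAdd 1)

lemma translateOne_zpow_apply (n : ℤ) (x : ℝ) :
    ((translateOne ^ n : CircleDeg1Liftˣ) : CircleDeg1Lift) x = n + x := by
  rw [translateOne, translate_zpow, translate_apply, mul_one]

lemma commute_translateOne (u : CircleDeg1Liftˣ) : Commute translateOne u := by
  have h := translateOne_zpow_apply 1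
  rw [zpow_one, Int.cast_one] at h
  refine Units.ext <| CircleDeg1Lift.ext fun x ↦ ?_
  rw [Units.val_mul, Units.val_mul, mul_apply, mul_apply, h, h, map_one_add]

lemma injective_zpow_translateOne : Injective (translateOne ^ · : ℤ → CircleDeg1Liftˣ) := by
  intro m n h
  have := congrArg (fun u : CircleDeg1Liftˣ ↦ (u : CircleDeg1Lift) 0) h
  simpa [translateOne_zpow_apply] using this

lemma semiconj_coe_translateOne_zpow (n : ℤ) :
    Semiconj ((↑) : ℝ → UnitAddCircle) ↑(translateOne ^ n) id := fun x ↦ by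
  rw [translateOne_zpow_apply, add_comm, UnitAddCircle.coe_add_intCast, id]

lemma exists_eq_translateOne_zpow_of_semiconj_coe_id {u : CircleDeg1Liftˣ}
    (hu : Semiconj ((↑) : ℝ → UnitAddCircle) u id) : ∃ n : ℤ, u = translateOne ^ n := by
  -- `x ↦ u x - x` is continuous and integer-valued, hence constant.
  choose k hk using fun x ↦ UnitAddCircle.exists_int_eq_add_of_coe_eq (hu x).symm
  have hu_cont : Continuous (u : CircleDeg1Lift) :=
    (continuous_iff_surjective _).2 (isUnit_iff_bijective.1 u.isUnit).2
  have hk_cont : Continuous k := by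
    rw [Int.isClosedEmbedding_coe_real.continuous_iff]
    convert hu_cont.sub continuous_id using 1
    ext x
    simp [hk x]
  refine ⟨k 0, Units.ext <| CircleDeg1Lift.ext fun x ↦ ?_⟩
  rw [translateOne_zpow_apply, hk x, PreconnectedSpace.constant inferInstance hk_cont, add_comm]

lemma exists_mul_eq_mul_translateOne_zpow {u v w : CircleDeg1Liftˣ}
    {f g : UnitAddCircle ≃ UnitAddCircle} (hu : Semiconj ((↑) : ℝ → UnitAddCircle) u f)
    (hv : Semiconj ((↑) : ℝ → UnitAddCircle) v g)
    (hw : Semiconj ((↑) : ℝ → UnitAddCircle) w (f ∘ g)) :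
    ∃ n : ℤ, u * v = w * translateOne ^ n := by
  have h : Semiconj ((↑) : ℝ → UnitAddCircle) ↑(w⁻¹ * (u * v)) id := fun x ↦ by
    apply f.injective.comp g.injective
    rw [← hw.eq, ← mul_apply, ← Units.val_mul, mul_inv_cancel_left, Units.val_mul, mul_apply,
      hu.eq, hv.eq, id, comp_apply]
  obtain ⟨n, hn⟩ := exists_eq_translateOne_zpow_of_semiconj_coe_id h
  exact ⟨n, by rw [← hn, mul_inv_cancel_left]⟩

end CircleDeg1Lift

section CentralExtension

variable {G : Type} [Group G]

lemma exists_coboundary_of_subsingleton_H2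
    (hH2 : Subsingleton (groupCohomology (Rep.trivial ℤ G ℤ) 2)) (c : G → G → ℤ)
    (hc : ∀ g h j, c (g * h) j + c g h = c h j + c g (h * j)) :
    ∃ b : G → ℤ, ∀ g h, c g h = b h - b (g * h) + b g := by
  let A := Rep.trivial ℤ G ℤ
  have hcocycle : (fun p : G × G ↦ (c p.1 p.2 : A)) ∈ groupCohomology.cocycles₂ A := by
    rw [groupCohomology.mem_cocycles₂_iff]
    intro g h j
    rw [Rep.trivial_ρ_apply]
    exact hc g h j
  have hH2' : Subsingleton (groupCohomology.H2 A) := hH2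
  obtain ⟨b, hb⟩ := (groupCohomology.H2π_eq_zero_iff ⟨_, hcocycle⟩).1 (Subsingleton.elim _ _)
  refine ⟨fun g ↦ (b g : ℤ), fun g h ↦ ?_⟩
  have hgh : A.ρ g (b h) - b (g * h) + b g = c g h := congrFun hb (g, h)
  rw [Rep.trivial_ρ_apply] at hgh
  exact hgh.symm

variable {E : Type*} [Group E]

theorem exists_monoidHom_eq_mul_zpow_of_subsingleton_H2
    (hH2 : Subsingleton (groupCohomology (Rep.trivial ℤ G ℤ) 2))
    {t : E} (ht : ∀ e, Commute t e) (ht_inj : Injective (t ^ · : ℤ → E))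
    (s : G → E) (hs : ∀ g h, ∃ n : ℤ, s g * s h = s (g * h) * t ^ n) :
    ∃ L : G →* E, ∀ g, ∃ n : ℤ, L g = s g * t ^ n := by
  choose c hc using hs
  have hcocycle : ∀ g h j, c (g * h) j + c g h = c h j + c g (h * j) := by
    intro g h j
    have key : s (g * h * j) * t ^ (c (g * h) j + c g h)
        = s (g * h * j) * t ^ (c g (h * j) + c h j) := by
      calc s (g * h * j) * t ^ (c (g * h) j + c g h)
          = s (g * h) * s j * t ^ c g h := by rw [hc (g * h) j, zpow_add, ← mul_assoc]
        _ = s g * s h * s j := by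
          rw [hc g h, mul_assoc (s (g * h)) (t ^ _), ((ht _).zpow_left _).eq, ← mul_assoc]
        _ = s g * s (h * j) * t ^ c h j := by rw [mul_assoc, hc h j, ← mul_assoc]
        _ = s (g * h * j) * t ^ (c g (h * j) + c h j) := by
          rw [hc g, zpow_add, mul_assoc g, mul_assoc]
    rw [add_comm (c h j)]
    exact ht_inj (mul_left_cancel key)
  obtain ⟨b, hb⟩ := exists_coboundary_of_subsingleton_H2 hH2 c hcocycle
  refine ⟨MonoidHom.mk' (fun g ↦ s g * t ^ (-b g)) fun g h ↦ ?_, fun g ↦ ⟨-b g, rfl⟩⟩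
  symm
  calc s g * t ^ (-b g) * (s h * t ^ (-b h))
      = s g * s h * (t ^ (-b g) * t ^ (-b h)) := by
        rw [mul_assoc, ← mul_assoc (t ^ _), ((ht _).zpow_left _).eq]
        simp only [mul_assoc]
    _ = s (g * h) * t ^ (c g h + -b g + -b h) := by
        rw [hc, zpow_add, zpow_add]
        simp only [mul_assoc]
    _ = s (g * h) * t ^ (-b (g * h)) := by
        rw [hb]
        congr 2
        ring

end CentralExtension

lemma eq_zero_of_forall_abs_nat_mul_le {a C : ℝ} (h : ∀ n : ℕ, |n * a| ≤ C) : a = 0 := by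
  by_contra ha
  have ha' : 0 < |a| := abs_pos.2 ha
  obtain ⟨n, hn⟩ := exists_nat_gt (C / |a|)
  have := h n
  rw [abs_mul, Nat.abs_cast] at this
  rw [div_lt_iff₀ ha'] at hn
  linarith

section Quasimorphism

variable {G : Type*} [Group G] {φ : G → ℝ} {D : ℝ}

lemma abs_apply_commutatorElement_le (hmul : ∀ g h, |φ (g * h) - φ g - φ h| ≤ D)
    (hinv : ∀ g, φ g⁻¹ = -φ g) (a b : G) : |φ ⁅a, b⁆| ≤ 3 * D := by
  have h₁ := abs_le.1 (hmul a b)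
  have h₂ := abs_le.1 (hmul (a * b) a⁻¹)
  have h₃ := abs_le.1 (hmul (a * b * a⁻¹) b⁻¹)
  rw [hinv] at h₂ h₃
  rw [commutatorElement_def, abs_le]
  constructor <;> linarith [h₁.1, h₁.2, h₂.1, h₂.2, h₃.1, h₃.2]

lemma abs_apply_prod_commutatorElement_le (hmul : ∀ g h, |φ (g * h) - φ g - φ h| ≤ D)
    (hinv : ∀ g, φ g⁻¹ = -φ g) (l : List (G × G)) :
    |φ (l.map fun p ↦ ⁅p.1, p.2⁆).prod| ≤ 4 * D * l.length := by
  induction l with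
  | nil =>
    have h1 : φ 1 = 0 := by linarith [inv_one (G := G) ▸ hinv 1]
    simp [h1]
  | cons p l ih =>
    have h₁ := abs_le.1 (hmul ⁅p.1, p.2⁆ (l.map fun p ↦ ⁅p.1, p.2⁆).prod)
    have h₂ := abs_le.1 (abs_apply_commutatorElement_le hmul hinv p.1 p.2)
    have h₃ := abs_le.1 ih
    rw [List.map_cons, List.prod_cons, List.length_cons, abs_le]
    push_cast
    constructor <;> linarith [h₁.1, h₁.2, h₂.1, h₂.2, h₃.1, h₃.2]

lemma eq_zero_of_uniformlyPerfect (hmul : ∀ g h, |φ (g * h) - φ g - φ h| ≤ D)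
    (hzpow : ∀ g (n : ℤ), φ (g ^ n) = n * φ g) (N : ℕ)
    (hperf : ∀ g : G, ∃ l : List (G × G), l.length ≤ N ∧ g = (l.map fun p ↦ ⁅p.1, p.2⁆).prod)
    (g : G) : φ g = 0 := by
  have hinv : ∀ g, φ g⁻¹ = -φ g := fun g ↦ by simpa using hzpow g (-1)
  have hD : 0 ≤ D := (abs_nonneg _).trans (hmul 1 1)
  have hbdd : ∀ g, |φ g| ≤ 4 * D * N := fun g ↦ by
    obtain ⟨l, hl, rfl⟩ := hperf g
    calc |φ (l.map fun p ↦ ⁅p.1, p.2⁆).prod| ≤ 4 * D * l.length :=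
          abs_apply_prod_commutatorElement_le hmul hinv l
      _ ≤ 4 * D * N := by gcongr
  refine eq_zero_of_forall_abs_nat_mul_le (C := 4 * D * N) fun n ↦ ?_
  have h := hbdd (g ^ (n : ℤ))
  rwa [hzpow, Int.cast_natCast] at h

end Quasimorphism

namespace CircleDeg1Lift

local notation "τ" => translationNumber

lemma abs_translationNumber_mul_sub_le (f g : CircleDeg1Lift) :
    |τ (f * g) - τ f - τ g| ≤ 4 := by
  have h₁ := abs_le.1 (dist_map_zero_translationNumber_le (f * g))
  have h₂ := abs_le.1 (dist_map_zero_translationNumber_le f)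
  have h₃ := abs_le.1 (dist_map_zero_translationNumber_le g)
  have h₄ := abs_lt.1 (dist_map_map_zero_lt f g)
  rw [mul_apply] at h₁
  rw [abs_le]
  constructor <;> linarith [h₁.1, h₁.2, h₂.1, h₂.2, h₃.1, h₃.2, h₄.1, h₄.2]

lemma translationNumber_eq_zero_of_uniformlyPerfect {G : Type*} [Group G] (N : ℕ)
    (hperf : ∀ g : G, ∃ l : List (G × G), l.length ≤ N ∧ g = (l.map fun p ↦ ⁅p.1, p.2⁆).prod)
    (L : G →* CircleDeg1Liftˣ) (g : G) : τ (L g) = 0 :=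
  eq_zero_of_uniformlyPerfect (φ := fun g ↦ τ (L g))
    (fun g h ↦ by simpa only [map_mul, Units.val_mul] using abs_translationNumber_mul_sub_le _ _)
    (fun g n ↦ by simpa only [map_zpow] using translationNumber_zpow (L g) n) N hperf g

lemma exists_forall_apply_eq_of_translationNumber_eq_zero {G : Type*} [Group G]
    (L : G →* CircleDeg1Liftˣ) (hL : ∀ g, τ (L g) = 0) : ∃ x : ℝ, ∀ g, L g x = x := by
  -- `F` semiconjugates the trivial action to `L`, so `F 0` is a common fixed point.
  obtain ⟨F, hF⟩ := semiconj_of_group_action_of_forall_translationNumber_eq 1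
    ((Units.coeHom _).comp L) fun g ↦ by simp [hL g]
  exact ⟨F 0, fun g ↦ by simpa using (hF g 0).symm⟩

theorem exists_monoidHom_semiconj_coe {G : Type} [Group G]
    (hH2 : Subsingleton (groupCohomology (Rep.trivial ℤ G ℤ) 2))
    (ρ : G →* (UnitAddCircle ≃ₜ UnitAddCircle))
    (hρ : ∀ g a b c, btw a b c → btw (ρ g a) (ρ g b) (ρ g c)) :
    ∃ L : G →* CircleDeg1Liftˣ, ∀ g, Semiconj ((↑) : ℝ → UnitAddCircle) (L g) (ρ g) := by
  choose ℓ hℓ using fun g ↦ UnitAddCircle.exists_unit_semiconj_coe (ρ g).toEquiv (hρ g)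
  have hℓ_mul : ∀ g h, ∃ n : ℤ, ℓ g * ℓ h = ℓ (g * h) * translateOne ^ n := fun g h ↦ by
    have hgh := hℓ (g * h)
    rw [map_mul] at hgh
    exact exists_mul_eq_mul_translateOne_zpow (hℓ g) (hℓ h) hgh
  obtain ⟨L, hL⟩ := exists_monoidHom_eq_mul_zpow_of_subsingleton_H2 hH2 commute_translateOne
    injective_zpow_translateOne ℓ hℓ_mul
  refine ⟨L, fun g ↦ ?_⟩
  obtain ⟨n, hn⟩ := hL g
  rw [hn, Units.val_mul, coe_mul]
  exact (hℓ g).comp_right (semiconj_coe_translateOne_zpow n)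

end CircleDeg1Lift

end

/-- (Ghys) If a group is uniformly perfect and has vanishing second group
cohomology with trivial ℤ coefficients, then every action of it on the circle
ℝ/ℤ by orientation-preserving homeomorphisms has a global fixed point. -/
theorem ghys_fixed_point_of_uniformly_perfect_and_H2_trivial
    (G : Type) [Group G] (N : ℕ)
    (hperf : ∀ g : G, ∃ l : List (G × G), l.length ≤ N ∧
      g = (l.map fun p => ⁅p.1, p.2⁆).prod)
    (hH2 : Subsingleton (groupCohomology (Rep.trivial ℤ G ℤ) 2))
    (ρ : G →* Homeomorph (AddCircle (1 : ℝ)) (AddCircle (1 : ℝ)))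
    (hpos : ∀ (g : G) (a b c : AddCircle (1 : ℝ)),
      btw a b c → btw (ρ g a) (ρ g b) (ρ g c)) :
    ∃ x : AddCircle (1 : ℝ), ∀ g : G, ρ g x = x := by
  obtain ⟨L, hL⟩ := exists_monoidHom_semiconj_coe hH2 ρ hpos
  obtain ⟨x, hx⟩ := exists_forall_apply_eq_of_translationNumber_eq_zero L
    (translationNumber_eq_zero_of_uniformlyPerfect N hperf L)
  exact ⟨x, fun g ↦ by rw [← (hL g).eq x, hx g]⟩
end

section
/- Every countable group with a left-invariant circular order acts faithfully on the circle by orientation-preserving homeomorphisms: if G is a countable group equipped with a circular order whose betweenness relation btw satisfies btw a b c → btw (g*a) (g*b) (g*c) for all g, a, b, c ∈ G, then there exists an injective group homomorphism ρ : G →* Homeomorph (AddCircle (1:ℝ)) (AddCircle (1:ℝ)) such that each ρ(g) preserves the betweenness relation btw of the circular order on AddCircle (1:ℝ). -/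
open Set

section

variable {α : Type*} {a b c : α}

theorem SBtw.sbtw.left_ne [CircularPreorder α] (h : sbtw a b c) : a ≠ b :=
  fun e => sbtw_irrefl_left (e ▸ h)

theorem SBtw.sbtw.ne_right [CircularPreorder α] (h : sbtw a b c) : b ≠ c :=
  fun e => sbtw_irrefl_right (e ▸ h)

theorem SBtw.sbtw.left_ne_right [CircularPreorder α] (h : sbtw a b c) : a ≠ c :=
  fun e => sbtw_irrefl_left_right (e ▸ h)

theorem sbtw_of_btw_of_ne [CircularPartialOrder α] (h : btw a b c) (hab : a ≠ b) (hbc : b ≠ c)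
    (hac : a ≠ c) : sbtw a b c :=
  sbtw_of_btw_not_btw h fun h' => by rcases h.antisymm h' with h | h | h <;> simp_all

end

namespace CircularOrder

variable {α : Type*}

/-- A copy of `α`, to be linearly ordered by cutting the circle open at `o`. -/
def Cut (_o : α) : Type _ := α

def toCut (o : α) : α ≃ Cut o := Equiv.refl α

variable (o : α) (β : Type*) in
/-- The line covering the circle `α` cut open at `o`, each point fattened to a copy of `β`. -/
abbrev Unrolled : Type _ := ℤ ×ₗ Cut o ×ₗ β

def Unrolled.mk {o : α} {β : Type*} (n : ℤ) (x : α) (q : β) : Unrolled o β :=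
  toLex (n, toLex (toCut o x, q))

theorem Unrolled.exists_eq_mk {o : α} {β : Type*} (p : Unrolled o β) :
    ∃ n x q, p = Unrolled.mk n x q :=
  ⟨(ofLex p).1, (toCut o).symm (ofLex (ofLex p).2).1, (ofLex (ofLex p).2).2, rfl⟩

variable [CircularOrder α] {o a b c : α}

def cutLT (o a b : α) : Prop := (a = o ∧ b ≠ o) ∨ sbtw o a b

theorem cutLT.ne_base (h : cutLT o a b) : b ≠ o := by
  rcases h with ⟨-, h⟩ | h
  exacts [h, h.left_ne_right.symm]

theorem sbtw_of_cutLT_of_cutLT (hab : cutLT o a b) (hbc : cutLT o b c) : sbtw a b c := by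
  have hbo := hab.ne_base
  rcases hbc with ⟨rfl, -⟩ | hbc
  · exact absurd rfl hbo
  rcases hab with ⟨rfl, -⟩ | hab
  · exact hbc
  · exact (sbtw_trans_right hbc.cyclic_left hab.cyclic_right).cyclic_right

theorem cutLT_trans (hab : cutLT o a b) (hbc : cutLT o b c) : cutLT o a c := by
  rcases hab with ⟨rfl, -⟩ | hab
  · exact .inl ⟨rfl, hbc.ne_base⟩
  · rcases hbc with ⟨hb, -⟩ | hbc
    · exact absurd hb (cutLT.ne_base (.inr hab))
    · exact .inr (sbtw_trans_right hab hbc)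

theorem cutLT_irrefl (a : α) : ¬ cutLT o a a := by
  rintro (⟨h, h'⟩ | h)
  exacts [h' h, sbtw_irrefl_right h]

theorem cutLT_trichotomous (a b : α) : cutLT o a b ∨ a = b ∨ cutLT o b a := by
  by_cases hab : a = b
  · exact .inr (.inl hab)
  by_cases ha : a = o
  · exact .inl (.inl ⟨ha, fun hb => hab (ha.trans hb.symm)⟩)
  by_cases hb : b = o
  · exact .inr (.inr (.inl ⟨hb, ha⟩))
  rcases btw_total o a b with h | h
  · exact .inl (.inr (sbtw_of_btw_of_ne h (Ne.symm ha) hab (Ne.symm hb)))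
  · exact .inr (.inr (.inr
      (sbtw_of_btw_of_ne h.cyclic_right (Ne.symm hb) (Ne.symm hab) (Ne.symm ha))))

instance (o : α) : IsStrictTotalOrder (Cut o) (cutLT (α := α) o) where
  trichotomous a b hab hba :=
    ((cutLT_trichotomous (α := α) a b).resolve_left hab).resolve_right hba
  irrefl := cutLT_irrefl (α := α)
  trans _ _ _ := cutLT_trans (α := α)

noncomputable instance (o : α) : LinearOrder (Cut o) :=
  @linearOrderOfSTO _ (cutLT (α := α) o) _ (Classical.decRel _)

theorem toCut_lt_toCut : toCut o a < toCut o b ↔ cutLT o a b := Iff.rfl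

section

attribute [local instance] LinearOrder.toCircularOrder

/-- On the right, `sbtw` is the circular order obtained by looping around the linear order of the
cut. -/
theorem sbtw_iff_sbtw_toCut (o : α) :
    sbtw a b c ↔ sbtw (toCut o a) (toCut o b) (toCut o c) := by
  have sorted {a b c : α} (h : sbtw (toCut o a) (toCut o b) (toCut o c)) : sbtw a b c := by
    rcases sbtw_iff.1 h with ⟨h₁, h₂⟩ | ⟨h₁, h₂⟩ | ⟨h₁, h₂⟩
    · exact sbtw_of_cutLT_of_cutLT h₁ h₂
    · exact (sbtw_of_cutLT_of_cutLT h₁ h₂).cyclic_right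
    · exact (sbtw_of_cutLT_of_cutLT h₁ h₂).cyclic_left
  refine ⟨fun h => ?_, sorted⟩
  by_contra hn
  exact h.not_sbtw <| sorted <| sbtw_of_btw_of_ne (btw_iff_not_sbtw.2 hn)
    h.ne_right.symm h.left_ne.symm h.left_ne_right.symm

end

noncomputable def wrap (o o' x : α) : ℤ := if toCut o x < toCut o o' then 1 else 0

/-- Cutting at `o'` is cutting at `o` and moving the points before `o'` to the end. -/
theorem toLex_wrap_lt_toLex_wrap {o' : α} (hab : toCut o' a < toCut o' b) :
    toLex (wrap o o' a, toCut o a) < toLex (wrap o o' b, toCut o b) := by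
  rw [toCut_lt_toCut] at hab
  have key : (a = o' ∧ toCut o b ≠ toCut o o') ∨
      toCut o o' < toCut o a ∧ toCut o a < toCut o b ∨
      toCut o a < toCut o b ∧ toCut o b < toCut o o' ∨
      toCut o b < toCut o o' ∧ toCut o o' < toCut o a := by
    rcases hab with ⟨ha, hb⟩ | h
    · exact .inl ⟨ha, (toCut o).injective.ne hb⟩
    · exact .inr (sbtw_iff.1 ((sbtw_iff_sbtw_toCut o).1 h))
  unfold wrap
  rcases key with ⟨rfl, _⟩ | ⟨_, _⟩ | ⟨_, _⟩ | ⟨_, _⟩ <;> split_ifs <;>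
    rw [Prod.Lex.toLex_lt_toLex] <;>
    first | exact .inl zero_lt_one | exact .inr ⟨rfl, by order⟩ | (exfalso; order)

theorem toCut_map_lt_toCut_map {f : α → α} (hf : Function.Injective f)
    (hsbtw : ∀ {a b c}, sbtw a b c → sbtw (f a) (f b) (f c)) (hab : toCut o a < toCut o b) :
    toCut (f o) (f a) < toCut (f o) (f b) := by
  rw [toCut_lt_toCut] at hab ⊢
  rcases hab with ⟨rfl, hb⟩ | h
  exacts [.inl ⟨rfl, hf.ne hb⟩, .inr (hsbtw h)]

section Unrolled

variable {β : Type*}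

theorem Unrolled.mk_lt_mk [LinearOrder β] {n n' : ℤ} {x x' : α} {q q' : β} :
    Unrolled.mk (o := o) n x q < Unrolled.mk n' x' q' ↔
      n < n' ∨ n = n' ∧ (toCut o x < toCut o x' ∨ x = x' ∧ q < q') := by
  simp [Unrolled.mk, Prod.Lex.toLex_lt_toLex]

variable (o β) in
/-- The lift of `f` keeping the base point `(n, o)` of each sheet in its sheet. -/
noncomputable def unrolledLift (f : α → α) (p : Unrolled o β) : Unrolled o β :=
  let x := (toCut o).symm (ofLex (ofLex p).2).1
  Unrolled.mk ((ofLex p).1 + wrap o (f o) (f x)) (f x) (ofLex (ofLex p).2).2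

theorem unrolledLift_mk (f : α → α) (n : ℤ) (x : α) (q : β) :
    unrolledLift o β f (Unrolled.mk n x q) = Unrolled.mk (n + wrap o (f o) (f x)) (f x) q :=
  rfl

theorem strictMono_unrolledLift [LinearOrder β] {f : α → α} (hf : Function.Injective f)
    (hsbtw : ∀ {a b c}, sbtw a b c → sbtw (f a) (f b) (f c)) :
    StrictMono (unrolledLift o β f) := by
  intro p p' h
  obtain ⟨n, x, q, rfl⟩ := p.exists_eq_mk
  obtain ⟨n', x', q', rfl⟩ := p'.exists_eq_mk
  rw [unrolledLift_mk, unrolledLift_mk, Unrolled.mk_lt_mk]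
  rw [Unrolled.mk_lt_mk] at h
  rcases h with hn | ⟨rfl, hx | ⟨rfl, hq⟩⟩
  · unfold wrap
    obtain hn | rfl := (Int.add_one_le_iff.2 hn).lt_or_eq
    · split_ifs <;> exact .inl (by omega)
    split_ifs with hx hx' <;> try exact .inl (by omega)
    -- adjacent sheets meet only if `f x` wraps and `f x'` does not: then `f x < f o ≤ f x'`
    exact .inr ⟨by omega, .inl (lt_of_lt_of_le hx (not_lt.1 hx'))⟩
  · have := Prod.Lex.toLex_lt_toLex.1 <|
      toLex_wrap_lt_toLex_wrap (o := o) (toCut_map_lt_toCut_map hf hsbtw hx)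
    rcases this with hw | ⟨hw, hfx⟩
    exacts [.inl (by omega), .inr ⟨by omega, .inl hfx⟩]
  · exact .inr ⟨rfl, .inr ⟨rfl, hq⟩⟩

theorem surjective_unrolledLift {f : α → α} (hf : Function.Surjective f) :
    Function.Surjective (unrolledLift o β f) := by
  intro p
  obtain ⟨n, y, q, rfl⟩ := p.exists_eq_mk
  obtain ⟨x, rfl⟩ := hf y
  exact ⟨Unrolled.mk (n - wrap o (f o) (f x)) x q, by rw [unrolledLift_mk, sub_add_cancel]⟩

end Unrolled

end CircularOrder

section DenseExtension

variable {α : Type*} [LinearOrder α] {e : α → ℝ}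

noncomputable def extendAlong (e : α → ℝ) (ψ : α → α) (x : ℝ) : ℝ :=
  sSup ((e ∘ ψ) '' {a | e a ≤ x})

theorem extendAlong_apply (he : StrictMono e) {ψ : α → α} (hψ : Monotone ψ) (a : α) :
    extendAlong e ψ (e a) = e (ψ a) :=
  IsGreatest.csSup_eq ⟨⟨a, le_refl (e a), rfl⟩, by
    rintro _ ⟨b, hb, rfl⟩
    exact he.monotone (hψ (he.le_iff_le.1 hb))⟩

variable (hd : Dense (range e))
include hd

theorem extendAlong_le_apply (he : StrictMono e) {ψ : α → α} (hψ : Monotone ψ) {x : ℝ} {a : α}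
    (hxa : x ≤ e a) : extendAlong e ψ x ≤ e (ψ a) := by
  obtain ⟨_, ⟨b, rfl⟩, hb⟩ := hd.exists_between (sub_one_lt x)
  refine csSup_le ⟨e (ψ b), b, hb.2.le, rfl⟩ ?_
  rintro _ ⟨c, hc, rfl⟩
  exact he.monotone (hψ (he.le_iff_le.1 (hc.trans hxa)))

theorem apply_le_extendAlong (he : StrictMono e) {ψ : α → α} (hψ : Monotone ψ) {x : ℝ} {a : α}
    (hax : e a ≤ x) : e (ψ a) ≤ extendAlong e ψ x := by
  obtain ⟨_, ⟨b, rfl⟩, hb⟩ := hd.exists_between (lt_add_one x)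
  refine le_csSup ⟨e (ψ b), ?_⟩ ⟨a, hax, rfl⟩
  rintro _ ⟨c, hc, rfl⟩
  exact he.monotone (hψ (he.le_iff_le.1 (hc.trans hb.1.le)))

theorem strictMono_extendAlong (he : StrictMono e) {ψ : α → α} (hψ : StrictMono ψ) :
    StrictMono (extendAlong e ψ) := by
  intro x y hxy
  obtain ⟨_, ⟨a, rfl⟩, hxa, hay⟩ := hd.exists_between hxy
  obtain ⟨_, ⟨b, rfl⟩, hab, hby⟩ := hd.exists_between hay
  calc extendAlong e ψ x ≤ e (ψ a) := extendAlong_le_apply hd he hψ.monotone hxa.le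
    _ < e (ψ b) := he (hψ (he.lt_iff_lt.1 hab))
    _ ≤ extendAlong e ψ y := apply_le_extendAlong hd he hψ.monotone hby.le

theorem continuous_extendAlong (he : StrictMono e) {ψ : α → α} (hψ : StrictMono ψ)
    (hψ' : Function.Surjective ψ) : Continuous (extendAlong e ψ) := by
  refine (strictMono_extendAlong hd he hψ).monotone.continuous_of_denseRange (hd.mono ?_)
  rintro _ ⟨a, rfl⟩
  obtain ⟨b, rfl⟩ := hψ' a
  exact ⟨e b, extendAlong_apply he hψ.monotone b⟩

theorem extendAlong_symm_apply_extendAlong (he : StrictMono e) (ψ : α ≃o α) (x : ℝ) :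
    extendAlong e ψ.symm (extendAlong e ψ x) = x := by
  have := (continuous_extendAlong hd he ψ.symm.strictMono ψ.symm.surjective).comp
    (continuous_extendAlong hd he ψ.strictMono ψ.surjective)
  refine congrFun (this.ext_on hd continuous_id ?_) x
  rintro _ ⟨a, rfl⟩
  simp [extendAlong_apply he ψ.monotone, extendAlong_apply he ψ.symm.monotone]

noncomputable def extendHomeomorph (he : StrictMono e) (ψ : α ≃o α) : ℝ ≃ₜ ℝ where
  toFun := extendAlong e ψ
  invFun := extendAlong e ψ.symm
  left_inv := extendAlong_symm_apply_extendAlong hd he ψ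
  right_inv := extendAlong_symm_apply_extendAlong hd he ψ.symm
  continuous_toFun := continuous_extendAlong hd he ψ.strictMono ψ.surjective
  continuous_invFun := continuous_extendAlong hd he ψ.symm.strictMono ψ.symm.surjective

end DenseExtension

namespace Homeomorph

variable {F : ℝ ≃ₜ ℝ}

theorem symm_apply_add_one (hF : ∀ x, F (x + 1) = F x + 1) (x : ℝ) :
    F.symm (x + 1) = F.symm x + 1 := by
  rw [F.symm_apply_eq, hF, F.apply_symm_apply]

theorem apply_add_intCast (hF : ∀ x, F (x + 1) = F x + 1) (x : ℝ) (n : ℤ) :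
    F (x + n) = F x + n :=
  AddConstMapClass.map_add_int (⟨F, hF⟩ : AddConstMap ℝ ℝ 1 1) x n

theorem leftRel_zmultiples_one_map (hF : ∀ x, F (x + 1) = F x + 1) {x y : ℝ}
    (h : QuotientAddGroup.leftRel (AddSubgroup.zmultiples (1 : ℝ)) x y) :
    QuotientAddGroup.leftRel (AddSubgroup.zmultiples (1 : ℝ)) (F x) (F y) := by
  rw [QuotientAddGroup.leftRel_apply, AddSubgroup.mem_zmultiples_iff] at h ⊢
  obtain ⟨n, hn⟩ := h
  refine ⟨n, ?_⟩
  rw [show y = x + n by simp only [zsmul_eq_mul, mul_one] at hn; linarith, apply_add_intCast hF]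
  simp

noncomputable def toAddCircle (F : ℝ ≃ₜ ℝ) (hF : ∀ x, F (x + 1) = F x + 1) :
    AddCircle (1 : ℝ) ≃ₜ AddCircle (1 : ℝ) where
  toFun := Quotient.map' F fun _ _ => leftRel_zmultiples_one_map hF
  invFun := Quotient.map' F.symm fun _ _ => leftRel_zmultiples_one_map (symm_apply_add_one hF)
  left_inv z := by induction z using QuotientAddGroup.induction_on; simp [Quotient.map'_mk'']
  right_inv z := by induction z using QuotientAddGroup.induction_on; simp [Quotient.map'_mk'']
  continuous_toFun := F.continuous.quotient_map' _
  continuous_invFun := F.symm.continuous.quotient_map' _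

@[simp]
theorem toAddCircle_coe (hF : ∀ x, F (x + 1) = F x + 1) (x : ℝ) :
    toAddCircle F hF x = (F x : AddCircle (1 : ℝ)) :=
  rfl

theorem map_toIcoMod (hF : ∀ x, F (x + 1) = F x + 1) (hFm : StrictMono F) (a b : ℝ) :
    F (toIcoMod one_pos a b) = toIcoMod one_pos (F a) (F b) := by
  obtain ⟨h₁, h₂⟩ := toIcoMod_mem_Ico one_pos a b
  rw [eq_comm, toIcoMod_eq_iff one_pos]
  refine ⟨⟨hFm.monotone h₁, hF a ▸ hFm h₂⟩, toIcoDiv one_pos a b, ?_⟩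
  conv_lhs => rw [← toIcoMod_add_toIcoDiv_zsmul one_pos a b]
  simp [apply_add_intCast hF]

theorem map_toIocMod (hF : ∀ x, F (x + 1) = F x + 1) (hFm : StrictMono F) (a b : ℝ) :
    F (toIocMod one_pos a b) = toIocMod one_pos (F a) (F b) := by
  obtain ⟨h₁, h₂⟩ := toIocMod_mem_Ioc one_pos a b
  rw [eq_comm, toIocMod_eq_iff one_pos]
  refine ⟨⟨hFm h₁, hF a ▸ hFm.monotone h₂⟩, toIocDiv one_pos a b, ?_⟩
  conv_lhs => rw [← toIocMod_add_toIocDiv_zsmul one_pos a b]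
  simp [apply_add_intCast hF]

theorem btw_toAddCircle (hF : ∀ x, F (x + 1) = F x + 1) (hFm : StrictMono F)
    {a b c : AddCircle (1 : ℝ)} (h : btw a b c) :
    btw (toAddCircle F hF a) (toAddCircle F hF b) (toAddCircle F hF c) := by
  induction a using QuotientAddGroup.induction_on
  induction b using QuotientAddGroup.induction_on
  induction c using QuotientAddGroup.induction_on
  rw [QuotientAddGroup.btw_coe_iff] at h
  simp only [toAddCircle_coe, QuotientAddGroup.btw_coe_iff]
  rw [← map_toIcoMod hF hFm, ← map_toIocMod hF hFm]
  exact hFm.monotone h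

end Homeomorph

instance {γ : Type*} [Countable γ] : Countable (Lex γ) := ‹Countable γ›

namespace CircularOrder

variable {α : Type*} [CircularOrder α]

instance [Countable α] (o : α) : Countable (Cut o) := ‹Countable α›

instance (o : α) : Nonempty (Cut o) := ⟨toCut o o⟩

section Realization

variable [Countable α] (o : α)

noncomputable def cutRatIso : Cut o ×ₗ ℚ ≃o Ioo (0 : ℚ) 1 :=
  have : Nonempty (Ioo (0 : ℚ) 1) := (nonempty_Ioo.2 zero_lt_one).to_subtype
  Classical.choice (Order.iso_of_countable_dense _ _)

theorem cutRatIso_mem_Ioo (l : Cut o ×ₗ ℚ) : ((cutRatIso o l : ℚ) : ℝ) ∈ Ioo 0 1 := by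
  obtain ⟨h₀, h₁⟩ := (cutRatIso o l).2
  constructor <;> assumption_mod_cast

noncomputable def unrolledEmb (p : Unrolled o ℚ) : ℝ :=
  (ofLex p).1 + ((cutRatIso o (ofLex p).2 : ℚ) : ℝ)

theorem unrolledEmb_mk (n : ℤ) (x : α) (q : ℚ) :
    unrolledEmb o (Unrolled.mk n x q) = n + ((cutRatIso o (toLex (toCut o x, q)) : ℚ) : ℝ) :=
  rfl

theorem strictMono_unrolledEmb : StrictMono (unrolledEmb o) := by
  intro p p' h
  rcases Prod.Lex.lt_iff.1 h with hn | ⟨hn, hl⟩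
  · have : ((ofLex p).1 : ℝ) + 1 ≤ (ofLex p').1 := by exact_mod_cast hn
    have h₀ := cutRatIso_mem_Ioo o (ofLex p).2
    have h₁ := cutRatIso_mem_Ioo o (ofLex p').2
    simp only [unrolledEmb, mem_Ioo] at h₀ h₁ ⊢
    linarith
  · simp only [unrolledEmb, hn]
    have : ((cutRatIso o (ofLex p).2 : ℚ) : ℝ) < (cutRatIso o (ofLex p').2 : ℚ) := by
      exact_mod_cast (cutRatIso o).strictMono hl
    linarith

theorem dense_range_unrolledEmb : Dense (range (unrolledEmb o)) := by
  refine dense_of_exists_between fun x y hxy => ?_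
  obtain ⟨q, hxq, hqy⟩ := exists_rat_btwn (lt_min (sub_lt_sub_right hxy ⌊x⌋)
    (sub_lt_iff_lt_add'.2 (Int.lt_floor_add_one x)))
  have hq : q ∈ Ioo (0 : ℚ) 1 := by
    constructor
    · exact_mod_cast (sub_nonneg.2 (Int.floor_le x)).trans_lt hxq
    · exact_mod_cast hqy.trans_le (min_le_right _ _)
  refine ⟨_, ⟨toLex (⌊x⌋, (cutRatIso o).symm ⟨q, hq⟩), rfl⟩, ?_, ?_⟩ <;>
    simp only [unrolledEmb, ofLex_toLex, OrderIso.apply_symm_apply]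
  · linarith
  · linarith [hqy.trans_le (min_le_left _ _)]

noncomputable def circlePoint (x : α) (q : ℚ) : AddCircle (1 : ℝ) :=
  ((cutRatIso o (toLex (toCut o x, q)) : ℚ) : ℝ)

theorem coe_unrolledEmb_mk (n : ℤ) (x : α) (q : ℚ) :
    (unrolledEmb o (Unrolled.mk n x q) : AddCircle (1 : ℝ)) = circlePoint o x q := by
  simp [unrolledEmb_mk, circlePoint]

theorem injective_circlePoint (q : ℚ) : Function.Injective (circlePoint o · q) := by
  intro x y h
  have hx := Ioo_subset_Ico_self (cutRatIso_mem_Ioo o (toLex (toCut o x, q)))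
  have hy := Ioo_subset_Ico_self (cutRatIso_mem_Ioo o (toLex (toCut o y, q)))
  rw [← zero_add (1 : ℝ)] at hx hy
  have := (AddCircle.coe_eq_coe_iff_of_mem_Ico hx hy).1 h
  have := (cutRatIso o).injective (Subtype.ext (by exact_mod_cast this))
  simpa using this

end Realization

section Action

variable {G : Type*} [Group G] [MulAction G α]

theorem sbtw_smul (hG : ∀ (g : G) (a b c : α), btw a b c → btw (g • a) (g • b) (g • c)) (g : G)
    {a b c : α} (h : sbtw a b c) : sbtw (g • a) (g • b) (g • c) :=
  sbtw_of_btw_not_btw (hG g _ _ _ h.btw) fun h' => h.not_btw (by simpa using hG g⁻¹ _ _ _ h')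

variable [Countable α] (o : α) (hG : ∀ (g : G) (a b c : α), btw a b c → btw (g • a) (g • b) (g • c))

noncomputable def unrolledAction (g : G) : Unrolled o ℚ ≃o Unrolled o ℚ :=
  StrictMono.orderIsoOfSurjective _
    (strictMono_unrolledLift (MulAction.injective g) (sbtw_smul hG g))
    (surjective_unrolledLift (MulAction.surjective g))

noncomputable def realAction (g : G) : ℝ ≃ₜ ℝ :=
  extendHomeomorph (dense_range_unrolledEmb o) (strictMono_unrolledEmb o) (unrolledAction o hG g)

theorem realAction_unrolledEmb (g : G) (p : Unrolled o ℚ) :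
    realAction o hG g (unrolledEmb o p) = unrolledEmb o (unrolledLift o ℚ (g • ·) p) :=
  extendAlong_apply (strictMono_unrolledEmb o) (unrolledAction o hG g).monotone p

theorem realAction_add_one (g : G) (x : ℝ) :
    realAction o hG g (x + 1) = realAction o hG g x + 1 := by
  have hc := (realAction o hG g).continuous
  refine congrFun ((hc.comp (continuous_add_const 1)).ext_on (dense_range_unrolledEmb o)
    (hc.add continuous_const) ?_) x
  rintro _ ⟨p, rfl⟩
  obtain ⟨n, y, q, rfl⟩ := p.exists_eq_mk
  have : unrolledEmb o (Unrolled.mk n y q) + 1 = unrolledEmb o (Unrolled.mk (n + 1) y q) := by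
    simp only [unrolledEmb_mk]; push_cast; ring
  simp only [Function.comp_apply, Pi.add_apply]
  rw [this, realAction_unrolledEmb, realAction_unrolledEmb, unrolledLift_mk, unrolledLift_mk,
    unrolledEmb_mk, unrolledEmb_mk]
  push_cast; ring

noncomputable def circleAction (g : G) : AddCircle (1 : ℝ) ≃ₜ AddCircle (1 : ℝ) :=
  (realAction o hG g).toAddCircle (realAction_add_one o hG g)

theorem circleAction_circlePoint (g : G) (x : α) (q : ℚ) :
    circleAction o hG g (circlePoint o x q) = circlePoint o (g • x) q := by
  rw [← coe_unrolledEmb_mk o 0, circleAction, Homeomorph.toAddCircle_coe, realAction_unrolledEmb,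
    unrolledLift_mk, coe_unrolledEmb_mk]

theorem circleAction_mul (g h : G) :
    circleAction o hG (g * h) = circleAction o hG g * circleAction o hG h := by
  have hd : DenseRange fun p => (unrolledEmb o p : AddCircle (1 : ℝ)) :=
    (QuotientAddGroup.mk_surjective.denseRange).comp (dense_range_unrolledEmb o)
      continuous_quotient_mk'
  refine Homeomorph.ext (congrFun <| (circleAction o hG (g * h)).continuous.ext_on hd
    (circleAction o hG g * circleAction o hG h).continuous ?_)
  rintro _ ⟨p, rfl⟩
  obtain ⟨n, x, q, rfl⟩ := p.exists_eq_mk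
  change circleAction o hG (g * h) (unrolledEmb o (Unrolled.mk n x q)) =
    circleAction o hG g (circleAction o hG h (unrolledEmb o (Unrolled.mk n x q)))
  simp only [coe_unrolledEmb_mk, circleAction_circlePoint, mul_smul]

theorem btw_circleAction (g : G) {a b c : AddCircle (1 : ℝ)} (h : btw a b c) :
    btw (circleAction o hG g a) (circleAction o hG g b) (circleAction o hG g c) :=
  Homeomorph.btw_toAddCircle _ (strictMono_extendAlong (dense_range_unrolledEmb o)
    (strictMono_unrolledEmb o) (unrolledAction o hG g).strictMono) h

noncomputable def circleActionHom : G →* (AddCircle (1 : ℝ) ≃ₜ AddCircle (1 : ℝ)) :=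
  MonoidHom.mk' (circleAction o hG) (circleAction_mul o hG)

end Action

end CircularOrder

/-- Every countable group with a left-invariant circular order acts faithfully
on the circle by orientation-preserving homeomorphisms. -/
theorem countable_circularly_ordered_group_acts_on_circle
    (G : Type*) [Group G] [Countable G] [CircularOrder G]
    (hinv : ∀ g a b c : G, btw a b c → btw (g * a) (g * b) (g * c)) :
    ∃ ρ : G →* Homeomorph (AddCircle (1 : ℝ)) (AddCircle (1 : ℝ)),
      Function.Injective ρ ∧
      ∀ (g : G) (a b c : AddCircle (1 : ℝ)),
        btw a b c → btw (ρ g a) (ρ g b) (ρ g c) := by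
  refine ⟨CircularOrder.circleActionHom 1 hinv, (injective_iff_map_eq_one _).2 fun g hg => ?_,
    fun g _ _ _ => CircularOrder.btw_circleAction 1 hinv g⟩
  have := CircularOrder.circleAction_circlePoint 1 hinv g 1 0
  rw [show CircularOrder.circleAction 1 hinv g = 1 from hg] at this
  simpa using CircularOrder.injective_circlePoint 1 0 this.symm
end

section
/- Every group acting faithfully on the circle by orientation-preserving homeomorphisms admits a left-invariant circular order: if G is a group and ρ : G →* Homeomorph (AddCircle (1:ℝ)) (AddCircle (1:ℝ)) is an injective group homomorphism such that each ρ(g) preserves the betweenness relation btw of the circular order on AddCircle (1:ℝ), then there exists a circular order on G whose betweenness relation btw satisfies btw a b c → btw (g*a) (g*b) (g*c) for all g, a, b, c ∈ G. -/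
/-
Cut the circle open at a base point `x₀` to get a linear order. Order `G` lexicographically:
first by where an element sends `x₀`, read in this cut; within a coset of the stabilizer of `x₀`,
by comparing the two elements at the first point, in a well-ordering of the circle, where they
differ. Faithfulness makes this a linear order, and the circular order on `G` is the one obtained by
looping it around. Left multiplication by `g` is increasing on the elements sending `x₀` at or
beyond `g⁻¹ • x₀` and on the remaining ones, and it moves the first block below the second: it is
a rotation of the linear order, so it preserves the circular order.
-/

open Function

section CutAt

variable {X : Type*} [CircularOrder X]

/-- `X` cut open at `q`: the point `q` comes first, then the others in circular order. -/
def CutAt (_ : X) : Type _ := X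

def toCutAt (q : X) : X ≃ CutAt q := Equiv.refl X

def cutLT (q x y : X) : Prop := sbtw q x y ∨ x = q ∧ y ≠ q

instance (q : X) : IsStrictTotalOrder X (cutLT q) where
  irrefl x h := h.elim sbtw_irrefl_right fun h => h.2 h.1
  trans x y z := by
    rintro (hxy | ⟨rfl, hy⟩) (hyz | ⟨rfl, -⟩)
    · exact .inl (sbtw_trans_right hxy hyz)
    · exact (sbtw_irrefl_left_right hxy).elim
    · exact .inr ⟨rfl, by rintro rfl; exact sbtw_irrefl_left_right hyz⟩
    · exact (hy rfl).elim
  trichotomous x y hxy hyx := by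
    by_contra hne
    by_cases hx : x = q
    · exact hxy (.inr ⟨hx, hx ▸ Ne.symm hne⟩)
    by_cases hy : y = q
    · exact hyx (.inr ⟨hy, hy ▸ hne⟩)
    have h₁ : btw y x q := sbtw_iff_not_btw.not_left.mp fun h => hxy (.inl h)
    have h₂ : btw q x y := btw_cyclic.mp (sbtw_iff_not_btw.not_left.mp fun h => hyx (.inl h))
    rcases h₁.antisymm h₂ with h | h | h
    exacts [hne h.symm, hx h, hy h.symm]

noncomputable instance (q : X) : LinearOrder (CutAt q) :=
  @linearOrderOfSTO X (cutLT q) _ (Classical.decRel _)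

variable {q x x' y : X}

theorem toCutAt_lt_toCutAt : toCutAt q x < toCutAt q y ↔ sbtw q x y ∨ x = q ∧ y ≠ q := Iff.rfl

/- Moving the cut from `q` to `y` keeps the order of two points on the same side of `y` and
swaps two points on opposite sides. -/

theorem toCutAt_lt_of_le_of_lt (hy : toCutAt q y ≤ toCutAt q x)
    (h : toCutAt q x < toCutAt q x') : toCutAt y x < toCutAt y x' := by
  rcases hy.eq_or_lt with hy | hy
  · obtain rfl : y = x := hy
    exact .inr ⟨rfl, h.ne'⟩
  rw [toCutAt_lt_toCutAt] at *
  rcases hy with hy | ⟨rfl, -⟩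
  · rcases h with h | ⟨rfl, -⟩
    · exact .inl (sbtw_cyclic_right (sbtw_trans_right (sbtw_cyclic_left h)
        (sbtw_cyclic_right hy)))
    · exact (sbtw_irrefl_left_right hy).elim
  · exact h

theorem toCutAt_lt_of_lt_of_lt (h : toCutAt q x < toCutAt q x')
    (hy : toCutAt q x' < toCutAt q y) : toCutAt y x < toCutAt y x' := by
  rw [toCutAt_lt_toCutAt] at *
  rcases hy with hy | ⟨rfl, hy⟩
  · rcases h with h | ⟨rfl, -⟩
    · exact .inl (sbtw_cyclic_left (sbtw_trans_right (sbtw_cyclic_left hy)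
        (sbtw_cyclic_right h)))
    · exact .inl (sbtw_cyclic_right hy)
  · exact (h.elim sbtw_irrefl_left_right fun h => h.2 rfl).elim

theorem toCutAt_lt_of_lt_of_le (hx : toCutAt q x < toCutAt q y)
    (hy : toCutAt q y ≤ toCutAt q x') : toCutAt y x' < toCutAt y x := by
  rcases hy.eq_or_lt with hy | hy
  · obtain rfl : y = x' := hy
    exact .inr ⟨rfl, hx.ne⟩
  rw [toCutAt_lt_toCutAt] at *
  rcases hy with hy | ⟨rfl, hy⟩
  · rcases hx with hx | ⟨rfl, -⟩
    · exact .inl (sbtw_trans_right (sbtw_cyclic_left hy) (sbtw_cyclic_right hx))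
    · exact .inl (sbtw_cyclic_left hy)
  · exact (hx.elim sbtw_irrefl_left_right fun h => h.2 rfl).elim

theorem toCutAt_map_lt_map {f : X → X} (hf : ∀ a b c, sbtw a b c → sbtw (f a) (f b) (f c))
    (hinj : Injective f) (h : toCutAt q x < toCutAt q y) :
    toCutAt (f q) (f x) < toCutAt (f q) (f y) :=
  h.imp (hf _ _ _) fun ⟨hx, hy⟩ => ⟨congrArg f hx, hinj.ne hy⟩

end CutAt

section LoopAround

variable {α β : Type*} [LinearOrder α] [LinearOrder β]

attribute [local instance] LinearOrder.toCircularOrder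

theorem btw_map_of_isUpperSet {f : α → β} {U : Set α} (hU : IsUpperSet U)
    (hin : StrictMonoOn f U) (hout : StrictMonoOn f Uᶜ) (hswap : ∀ a ∉ U, ∀ b ∈ U, f b < f a)
    {a b c : α} (h : btw a b c) : btw (f a) (f b) (f c) := by
  have key {a b c : α} (hab : a ≤ b) (hbc : b ≤ c) : btw (f a) (f b) (f c) := by
    by_cases ha : a ∈ U
    · have hb := hU hab ha
      exact .inl ⟨hin.monotoneOn ha hb hab, hin.monotoneOn hb (hU hbc hb) hbc⟩
    by_cases hc : c ∈ U
    · by_cases hb : b ∈ U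
      · exact .inr (.inl ⟨hin.monotoneOn hb hc hbc, (hswap a ha c hc).le⟩)
      · exact .inr (.inr ⟨(hswap a ha c hc).le, hout.monotoneOn ha hb hab⟩)
    · have hb : b ∉ U := fun hb => hc (hU hbc hb)
      exact .inl ⟨hout.monotoneOn ha hb hab, hout.monotoneOn hb hc hbc⟩
  rcases h with ⟨hab, hbc⟩ | ⟨hbc, hca⟩ | ⟨hca, hab⟩
  · exact key hab hbc
  · exact btw_cyclic_right (key hbc hca)
  · exact btw_cyclic_left (key hca hab)

end LoopAround

theorem Pi.toLex_comp_lt_toLex_comp {ι β γ : Type*} [LT ι] [Preorder β] [Preorder γ]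
    {f : β → γ} (hf : StrictMono f) {x y : ι → β} (h : toLex x < toLex y) :
    toLex (f ∘ x) < toLex (f ∘ y) :=
  let ⟨i, hlt, hi⟩ := h
  ⟨i, fun j hj => congrArg f (hlt j hj), hf hi⟩

namespace CircularAction

variable {G X : Type*} [Group G] [MulAction G X] (x₀ : X)

noncomputable def orbitRep (p : X) : G := invFun (· • x₀) p

theorem orbitRep_smul (g : G) : (orbitRep x₀ (g • x₀) : G) • x₀ = g • x₀ :=
  invFun_eq (f := (· • x₀)) ⟨g, rfl⟩

variable {ι : Type*} (ξ : ι → X)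

def cutProfile (g : G) : Lex (ι → CutAt x₀) := toLex fun i => toCutAt x₀ (g • ξ i)

/-- Within its coset `r * stabilizer x₀`, the element `g` is compared through `r⁻¹ * g`: left
multiplication changes this only by an element fixing `x₀`, and those preserve the order of
profiles. -/
noncomputable def lexCode (g : G) : CutAt x₀ ×ₗ Lex (ι → CutAt x₀) :=
  toLex (toCutAt x₀ (g • x₀), cutProfile x₀ ξ ((orbitRep x₀ (g • x₀))⁻¹ * g))

theorem lexCode_injective [FaithfulSMul G X] (hξ : Surjective ξ) :
    Injective (lexCode (G := G) x₀ ξ) := by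
  intro a b h
  simp only [lexCode, toLex_inj, Prod.mk.injEq] at h
  obtain ⟨h₀, h₁⟩ := h
  have h₀ : a • x₀ = b • x₀ := (toCutAt x₀).injective h₀
  rw [h₀] at h₁
  refine mul_left_cancel (a := (orbitRep x₀ (b • x₀))⁻¹) (eq_of_smul_eq_smul (α := X) fun x => ?_)
  obtain ⟨i, rfl⟩ := hξ x
  exact congrFun (toLex.injective h₁) i

variable [CircularOrder X]
  (hG : ∀ (g : G) (a b c : X), btw a b c → btw (g • a) (g • b) (g • c))

include hG in
theorem sbtw_smul (g : G) {a b c : X} (h : sbtw a b c) : sbtw (g • a) (g • b) (g • c) := by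
  rw [sbtw_iff_btw_not_btw] at *
  exact ⟨hG g _ _ _ h.1, fun h' => h.2 (by simpa using hG g⁻¹ _ _ _ h')⟩

include hG in
theorem toCutAt_smul_lt_smul (g : G) {q q' x y : X} (hq : g • q = q')
    (h : toCutAt q x < toCutAt q y) : toCutAt q' (g • x) < toCutAt q' (g • y) :=
  hq ▸ toCutAt_map_lt_map (fun _ _ _ => sbtw_smul hG g) (MulAction.injective g) h

variable {x₀ ξ}

include hG in
theorem cutProfile_mul_lt_mul [LT ι] {k : G} (hk : k • x₀ = x₀) {a b : G}
    (h : cutProfile x₀ ξ a < cutProfile x₀ ξ b) :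
    cutProfile x₀ ξ (k * a) < cutProfile x₀ ξ (k * b) := by
  have hk : StrictMono fun p : CutAt x₀ => toCutAt x₀ (k • (toCutAt x₀).symm p) := by
    intro p p' h
    exact toCutAt_smul_lt_smul hG k hk h
  simpa only [cutProfile, mul_smul, comp_def, Equiv.symm_apply_apply]
    using Pi.toLex_comp_lt_toLex_comp hk h

theorem lexCode_lt_lexCode [LT ι] {a b : G} (h : toCutAt x₀ (a • x₀) < toCutAt x₀ (b • x₀)) :
    lexCode x₀ ξ a < lexCode x₀ ξ b :=
  Prod.Lex.toLex_lt_toLex.2 (.inl h)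

include hG in
theorem lexCode_mul_lt_mul_of_smul_eq [LT ι] (g : G) {a b : G} (h₀ : a • x₀ = b • x₀)
    (h : lexCode x₀ ξ a < lexCode x₀ ξ b) : lexCode x₀ ξ (g * a) < lexCode x₀ ξ (g * b) := by
  have hg₀ : (g * a) • x₀ = (g * b) • x₀ := by rw [mul_smul, mul_smul, h₀]
  simp only [lexCode, Prod.Lex.toLex_lt_toLex, h₀, hg₀, lt_irrefl, false_or, true_and] at h ⊢
  set r := (orbitRep x₀ (b • x₀) : G)
  set r' := (orbitRep x₀ ((g * b) • x₀) : G)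
  have hk : (r'⁻¹ * g * r) • x₀ = x₀ := by
    rw [mul_smul, orbitRep_smul, ← mul_smul, mul_assoc, mul_smul, ← orbitRep_smul x₀ (g * b),
      inv_smul_smul]
  simpa only [mul_assoc, mul_inv_cancel_left] using cutProfile_mul_lt_mul hG hk h

include hG in
theorem lexCode_mul_lt_mul_of_cutAt_inv_lt [LT ι] (g : G) {a b : G}
    (h : toCutAt (g⁻¹ • x₀) (a • x₀) < toCutAt (g⁻¹ • x₀) (b • x₀)) :
    lexCode x₀ ξ (g * a) < lexCode x₀ ξ (g * b) := by
  apply lexCode_lt_lexCode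
  rw [mul_smul, mul_smul]
  exact toCutAt_smul_lt_smul hG g (smul_inv_smul g x₀) h

include hG in
theorem lexCode_mul_lt_mul [LT ι] (g : G) {a b : G}
    (hsame : toCutAt x₀ (g⁻¹ • x₀) ≤ toCutAt x₀ (a • x₀) ↔
      toCutAt x₀ (g⁻¹ • x₀) ≤ toCutAt x₀ (b • x₀))
    (h : lexCode x₀ ξ a < lexCode x₀ ξ b) : lexCode x₀ ξ (g * a) < lexCode x₀ ξ (g * b) := by
  rcases Prod.Lex.toLex_lt_toLex.1 h with h | ⟨h₀, -⟩
  · apply lexCode_mul_lt_mul_of_cutAt_inv_lt hG g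
    by_cases hy : toCutAt x₀ (g⁻¹ • x₀) ≤ toCutAt x₀ (a • x₀)
    · exact toCutAt_lt_of_le_of_lt hy h
    · exact toCutAt_lt_of_lt_of_lt h (not_le.1 (hsame.not.1 hy))
  · exact lexCode_mul_lt_mul_of_smul_eq hG g ((toCutAt x₀).injective h₀) h

include hG in
theorem lexCode_mul_lt_mul_of_lt_of_le [LT ι] (g : G) {a b : G}
    (ha : toCutAt x₀ (a • x₀) < toCutAt x₀ (g⁻¹ • x₀))
    (hb : toCutAt x₀ (g⁻¹ • x₀) ≤ toCutAt x₀ (b • x₀)) :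
    lexCode x₀ ξ (g * b) < lexCode x₀ ξ (g * a) :=
  lexCode_mul_lt_mul_of_cutAt_inv_lt hG g (toCutAt_lt_of_lt_of_le ha hb)

end CircularAction

theorem exists_circularOrder_of_faithfulSMul {G X : Type*} [Group G] [CircularOrder X]
    [MulAction G X] [FaithfulSMul G X] [Nonempty X]
    (hG : ∀ (g : G) (a b c : X), btw a b c → btw (g • a) (g • b) (g • c)) :
    ∃ co : CircularOrder G, ∀ g a b c : G, co.btw a b c → co.btw (g * a) (g * b) (g * c) := by
  obtain ⟨x₀⟩ := ‹Nonempty X›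
  obtain ⟨_, _⟩ := exists_wellFoundedLT X
  let _ := LinearOrder.lift' _ (CircularAction.lexCode_injective x₀ id surjective_id (G := G))
  refine ⟨LinearOrder.toCircularOrder G, fun g a b c => btw_map_of_isUpperSet
    (U := {a | toCutAt x₀ (g⁻¹ • x₀) ≤ toCutAt x₀ (a • x₀)}) ?_ ?_ ?_ ?_⟩
  · exact fun a b hab ha => ha.trans (Prod.Lex.monotone_fst _ _ hab)
  · exact fun a ha b hb => CircularAction.lexCode_mul_lt_mul hG g (iff_of_true ha hb)
  · exact fun a ha b hb => CircularAction.lexCode_mul_lt_mul hG g (iff_of_false ha hb)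
  · exact fun a ha b hb => CircularAction.lexCode_mul_lt_mul_of_lt_of_le hG g (not_le.1 ha) hb

/-- Every group acting faithfully on the circle by orientation-preserving
homeomorphisms admits a left-invariant circular order. -/
theorem circular_order_of_faithful_circle_action
    (G : Type*) [Group G]
    (ρ : G →* Homeomorph (AddCircle (1 : ℝ)) (AddCircle (1 : ℝ)))
    (hinj : Function.Injective ρ)
    (hpos : ∀ (g : G) (a b c : AddCircle (1 : ℝ)),
      btw a b c → btw (ρ g a) (ρ g b) (ρ g c)) :
    ∃ co : CircularOrder G,
      ∀ g a b c : G, co.btw a b c → co.btw (g * a) (g * b) (g * c) := by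
  let _ : MulAction G (AddCircle (1 : ℝ)) :=
    { smul g x := ρ g x
      one_smul x := congrArg (· x) (map_one ρ)
      mul_smul g h x := congrArg (· x) (map_mul ρ g h) }
  have : FaithfulSMul G (AddCircle (1 : ℝ)) := ⟨fun h => hinj (Homeomorph.ext h)⟩
  exact exists_circularOrder_of_faithfulSMul hpos
end

section
/- An action of a group on the real line by order isomorphisms that has one orbit bounded above has a global fixed point: if G is a group, ρ : G →* (ℝ ≃o ℝ), and there exists x ∈ ℝ such that the set { (ρ g)(x) | g ∈ G } is bounded above, then there exists y ∈ ℝ with (ρ g)(y) = y for all g ∈ G. -/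
theorem OrderIso.map_csSup_of_image_eq {α : Type*} [ConditionallyCompleteLattice α]
    (f : α ≃o α) {s : Set α} (hne : s.Nonempty) (hbdd : BddAbove s) (hs : f '' s = s) :
    f (sSup s) = sSup s := by
  rw [f.map_csSup' hne hbdd, hs]

theorem MonoidHom.image_range_apply_orderIso {G α : Type*} [Group G] [Preorder α]
    (ρ : G →* (α ≃o α)) (g : G) (x : α) :
    ρ g '' Set.range (fun h : G => ρ h x) = Set.range (fun h : G => ρ h x) := by
  rw [← Set.range_comp, ← (Equiv.mulLeft g).surjective.range_comp (fun h => ρ h x)]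
  congr 1
  ext h
  simp [map_mul]

/-- An action of a group on the real line by order isomorphisms with an orbit
bounded above has a global fixed point. -/
theorem fixed_point_of_bddAbove_orbit
    {G : Type*} [Group G] (ρ : G →* (ℝ ≃o ℝ))
    (hbdd : ∃ x : ℝ, BddAbove (Set.range fun g : G => ρ g x)) :
    ∃ y : ℝ, ∀ g : G, ρ g y = y := by
  obtain ⟨x, hbdd⟩ := hbdd
  exact ⟨sSup (Set.range fun g : G => ρ g x), fun g =>
    (ρ g).map_csSup_of_image_eq (Set.range_nonempty _) hbdd (ρ.image_range_apply_orderIso g x)⟩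
end

section
/- The second integral group homology of the Klein four-group is ℤ/2: the abelian group H₂(ℤ/2 × ℤ/2; ℤ), i.e. the degree-2 group homology of the group ZMod 2 × ZMod 2 with coefficients in the trivial representation ℤ, is isomorphic to ℤ/2. -/
/-! Second integral group homology of an additive group `G`, defined concretely
via the inhomogeneous bar complex with trivial `ℤ` coefficients:
`H₂(G;ℤ) = ker d₁ / im d₂` where
`d₁(g,h) = [h] - [g+h] + [g]` and
`d₂(g,h,k) = [(h,k)] - [(g+h,k)] + [(g,h+k)] - [(g,h)]`. -/

variable (G : Type*) [AddGroup G]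

/-- The boundary map from 2-chains to 1-chains of the bar complex of `G`
with trivial `ℤ` coefficients. -/
noncomputable def barD1 : ((G × G) →₀ ℤ) →+ (G →₀ ℤ) :=
  Finsupp.liftAddHom fun p => zmultiplesHom _
    (Finsupp.single p.2 1 - Finsupp.single (p.1 + p.2) 1 + Finsupp.single p.1 1)

/-- The boundary map from 3-chains to 2-chains of the bar complex of `G`
with trivial `ℤ` coefficients. -/
noncomputable def barD2 : ((G × G × G) →₀ ℤ) →+ ((G × G) →₀ ℤ) :=
  Finsupp.liftAddHom fun t => zmultiplesHom _
    (Finsupp.single (t.2.1, t.2.2) 1 - Finsupp.single (t.1 + t.2.1, t.2.2) 1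
      + Finsupp.single (t.1, t.2.1 + t.2.2) 1 - Finsupp.single (t.1, t.2.1) 1)

/-- The second group homology `H₂(G;ℤ)` with coefficients in the trivial
`G`-representation `ℤ`: 2-cycles modulo 2-boundaries in the bar complex. -/
noncomputable def groupHomologyTwo : Type _ :=
  (barD1 G).ker ⧸ ((barD2 G).range.addSubgroupOf (barD1 G).ker)

noncomputable instance : AddCommGroup (groupHomologyTwo G) :=
  inferInstanceAs (AddCommGroup
    ((barD1 G).ker ⧸ ((barD2 G).range.addSubgroupOf (barD1 G).ker)))

/-! Modulo boundaries, the boundary of `[g|h|k]` becomes the cocycle identity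
`[h|k] + [g|h+k] = [g+h|k] + [g|h]` between classes of 2-chains. In an abelian group generated
by two involutions `a, b` it expresses every class through `[0|0], [a|a], [b|b], [a|b], [b|a]`
and gives `2 ([a|b] - [b|a]) ≡ 0`. For `K₄`, comparing coefficients of `d₁` at the four group
elements shows that a cycle among these combinations is a multiple of `[a|b] - [b|a]`; the
bilinear form `(g, h) ↦ g.1 * h.2` vanishes on boundaries and takes the value `1` there, so it
detects the parity of that multiple. -/

open Finsupp

section BarComplex

variable {G}

@[simp]
lemma barD1_single (g h : G) (n : ℤ) :
    barD1 G (single (g, h) n) = single h n - single (g + h) n + single g n := by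
  simp [barD1, smul_sub, smul_add]

@[simp]
lemma barD2_single (g h k : G) (n : ℤ) :
    barD2 G (single (g, h, k) n) =
      single (h, k) n - single (g + h, k) n + single (g, h + k) n - single (g, h) n := by
  simp [barD2, smul_sub, smul_add]

lemma barD1_comp_barD2 : (barD1 G).comp (barD2 G) = 0 := by
  refine addHom_ext fun ⟨g, h, k⟩ n => ?_
  simp only [AddMonoidHom.coe_comp, Function.comp_apply, barD2_single, map_sub, map_add,
    barD1_single, add_assoc, AddMonoidHom.zero_apply]
  abel

noncomputable def barPairing {A : Type*} [AddCommGroup A] (β : G →+ G →+ A) :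
    ((G × G) →₀ ℤ) →+ A :=
  liftAddHom fun p => zmultiplesHom A (β p.1 p.2)

@[simp]
lemma barPairing_single {A : Type*} [AddCommGroup A] (β : G →+ G →+ A) (g h : G) (n : ℤ) :
    barPairing β (single (g, h) n) = n • β g h := by
  simp [barPairing]

lemma barPairing_comp_barD2 {A : Type*} [AddCommGroup A] (β : G →+ G →+ A) :
    (barPairing β).comp (barD2 G) = 0 :=
  addHom_ext fun ⟨g, h, k⟩ n => by simp

end BarComplex

abbrev ChainsModBoundaries : Type _ := ((G × G) →₀ ℤ) ⧸ (barD2 G).range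

section ChainsModBoundaries

variable {G}

noncomputable def barClass (g h : G) : ChainsModBoundaries G :=
  QuotientAddGroup.mk (single (g, h) 1)

lemma mk_single_eq_zsmul_barClass (g h : G) (n : ℤ) :
    (QuotientAddGroup.mk (single (g, h) n) : ChainsModBoundaries G) = n • barClass g h := by
  rw [barClass, ← QuotientAddGroup.mk_zsmul, smul_single_one]

lemma barClass_cocycle (g h k : G) :
    barClass h k + barClass g (h + k) = barClass (g + h) k + barClass g h := by
  have hB : (QuotientAddGroup.mk (barD2 G (single (g, h, k) 1)) : ChainsModBoundaries G) = 0 :=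
    (QuotientAddGroup.eq_zero_iff _).2 ⟨_, rfl⟩
  simp only [barD2_single, QuotientAddGroup.mk_add, QuotientAddGroup.mk_sub] at hB
  simp only [barClass]
  linear_combination (norm := abel) hB

lemma barClass_zero_left (h : G) : barClass 0 h = barClass 0 0 := by
  simpa using barClass_cocycle 0 0 h

lemma barClass_zero_right (g : G) : barClass g 0 = barClass 0 0 := by
  simpa using (barClass_cocycle g 0 0).symm

lemma barClass_add_self_left {g h : G} (hh : h + h = 0) :
    barClass (g + h) h = barClass h h + barClass 0 0 - barClass g h := by
  have := barClass_cocycle g h h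
  rw [hh, barClass_zero_right] at this
  linear_combination (norm := abel) -this

lemma barClass_self_add_right {g k : G} (hg : g + g = 0) :
    barClass g (g + k) = barClass 0 0 + barClass g g - barClass g k := by
  have := barClass_cocycle g g k
  rw [hg, barClass_zero_left] at this
  linear_combination (norm := abel) this

noncomputable def barD1Quot : ChainsModBoundaries G →+ (G →₀ ℤ) :=
  QuotientAddGroup.lift _ (barD1 G) fun _ ⟨y, hy⟩ => by
    rw [AddMonoidHom.mem_ker, ← hy, ← AddMonoidHom.comp_apply, barD1_comp_barD2]; rfl

@[simp]
lemma barD1Quot_barClass (g h : G) :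
    barD1Quot (barClass g h) = single h 1 - single (g + h) 1 + single g 1 :=
  barD1_single g h 1

noncomputable def barPairingQuot {A : Type*} [AddCommGroup A] (β : G →+ G →+ A) :
    ChainsModBoundaries G →+ A :=
  QuotientAddGroup.lift _ (barPairing β) fun _ ⟨y, hy⟩ => by
    rw [AddMonoidHom.mem_ker, ← hy, ← AddMonoidHom.comp_apply, barPairing_comp_barD2]; rfl

@[simp]
lemma barPairingQuot_barClass {A : Type*} [AddCommGroup A] (β : G →+ G →+ A) (g h : G) :
    barPairingQuot β (barClass g h) = β g h := by
  simp [barPairingQuot, barClass]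

end ChainsModBoundaries

section AddCommGroup

variable {G : Type*} [AddCommGroup G]

lemma barD1_single_sub_single_swap (g h : G) :
    barD1 G (single (g, h) 1 - single (h, g) 1) = 0 := by
  rw [map_sub, barD1_single, barD1_single, add_comm h g]
  abel

lemma two_nsmul_barClass_sub_swap {g h : G} (hg : g + g = 0) :
    2 • (barClass g h - barClass h g) = 0 := by
  have := barClass_cocycle g h g
  rw [add_comm h g, barClass_self_add_right hg, add_comm g h, barClass_add_self_left hg] at this
  linear_combination (norm := abel) -this

noncomputable def twoGeneratorClasses (a b : G) : Fin 5 → ChainsModBoundaries G :=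
  ![barClass 0 0, barClass a a, barClass b b, barClass a b, barClass b a]

lemma barClass_mem_closure_twoGeneratorClasses {a b : G} (ha : a + a = 0) (hb : b + b = 0)
    (hG : ∀ g : G, g = 0 ∨ g = a ∨ g = b ∨ g = a + b) (g h : G) :
    barClass g h ∈ AddSubgroup.closure (Set.range (twoGeneratorClasses a b)) := by
  set S := AddSubgroup.closure (Set.range (twoGeneratorClasses a b))
  have hS : ∀ i, twoGeneratorClasses a b i ∈ S :=
    fun i => AddSubgroup.subset_closure ⟨i, rfl⟩
  have he := hS 0
  have haa := hS 1
  have hbb := hS 2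
  have hab := hS 3
  have hba := hS 4
  simp only [twoGeneratorClasses, Fin.isValue, Matrix.cons_val] at he haa hbb hab hba
  have hac : barClass a (a + b) ∈ S := by
    rw [barClass_self_add_right ha]
    apply_rules [add_mem, sub_mem]
  have hbc : barClass b (a + b) ∈ S := by
    rw [add_comm, barClass_self_add_right hb]
    apply_rules [add_mem, sub_mem]
  have hca : barClass (a + b) a ∈ S := by
    rw [add_comm, barClass_add_self_left ha]
    apply_rules [add_mem, sub_mem]
  have hcb : barClass (a + b) b ∈ S := by
    rw [barClass_add_self_left hb]
    apply_rules [add_mem, sub_mem]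
  have hcc : barClass (a + b) (a + b) ∈ S := by
    have hc : (a + b) + (a + b) = 0 := by rw [add_add_add_comm, ha, hb, add_zero]
    have h := barClass_self_add_right hc (k := a)
    rw [add_right_comm, ha, zero_add] at h
    rw [show barClass (a + b) (a + b) = barClass (a + b) b + barClass (a + b) a - barClass 0 0 by
      rw [h]; abel]
    apply_rules [add_mem, sub_mem]
  rcases hG g with rfl | rfl | rfl | rfl <;> rcases hG h with rfl | rfl | rfl | rfl <;>
    (try simp only [barClass_zero_left, barClass_zero_right]) <;> assumption

lemma closure_twoGeneratorClasses_eq_top {a b : G} (ha : a + a = 0) (hb : b + b = 0)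
    (hG : ∀ g : G, g = 0 ∨ g = a ∨ g = b ∨ g = a + b) :
    AddSubgroup.closure (Set.range (twoGeneratorClasses a b)) = ⊤ := by
  refine eq_top_iff.2 fun q _ => QuotientAddGroup.induction_on q fun x => ?_
  induction x using Finsupp.induction_linear with
  | zero => exact zero_mem _
  | add x y hx hy => exact add_mem hx hy
  | single p n =>
    rw [mk_single_eq_zsmul_barClass]
    exact zsmul_mem (barClass_mem_closure_twoGeneratorClasses ha hb hG p.1 p.2) n

end AddCommGroup

local notation "K₄" => ZMod 2 × ZMod 2

def kleinForm : K₄ →+ K₄ →+ ZMod 2 :=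
  AddMonoidHom.mk' (fun g => AddMonoidHom.mk' (fun h => g.1 * h.2) fun _ _ => mul_add _ _ _)
    fun _ _ => by ext; simp [add_mul]

@[simp]
lemma kleinForm_apply (g h : K₄) : kleinForm g h = g.1 * h.2 := rfl

lemma eq_zero_of_barD1Quot_eq_zero_of_barPairingQuot_kleinForm_eq_zero
    (q : ChainsModBoundaries K₄) (h1 : barD1Quot q = 0) (h2 : barPairingQuot kleinForm q = 0) :
    q = 0 := by
  have hK : ∀ g : K₄, g = 0 ∨ g = (1, 0) ∨ g = (0, 1) ∨ g = (1, 0) + (0, 1) := by decide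
  have hq := closure_twoGeneratorClasses_eq_top (by decide) (by decide) hK ▸ AddSubgroup.mem_top q
  obtain ⟨n, rfl⟩ := AddSubgroup.mem_closure_range_iff_of_fintype.1 hq
  have hchar : (1 : ZMod 2) + 1 = 0 := rfl
  simp only [Fin.sum_univ_five, twoGeneratorClasses, Matrix.cons_val, map_add, map_zsmul,
    barD1Quot_barClass, barPairingQuot_barClass, kleinForm_apply] at h1 h2
  have e0 : n 0 = n 1 + n 2 := by
    have h := congr($h1 (0, 0)); simp [Prod.mk_zero_zero, hchar] at h; omega
  have ea : 2 * n 1 + n 3 + n 4 = 0 := by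
    have h := congr($h1 (1, 0)); simp [hchar] at h; omega
  have eb : 2 * n 2 + n 3 + n 4 = 0 := by
    have h := congr($h1 (0, 1)); simp [hchar] at h; omega
  have ec : n 3 + n 4 = 0 := by
    have h := congr($h1 (1, 1)); simp at h; omega
  obtain ⟨m, hm⟩ : 2 ∣ n 3 := (ZMod.intCast_zmod_eq_zero_iff_dvd _ 2).1 (by simpa using h2)
  have hz := two_nsmul_barClass_sub_swap (g := ((1, 0) : K₄)) (h := (0, 1)) (by decide)
  rw [Fin.sum_univ_five]
  simp only [twoGeneratorClasses, Matrix.cons_val]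
  rw [show n 4 = -n 3 by omega, show n 0 = 0 by omega, show n 1 = 0 by omega,
    show n 2 = 0 by omega, hm]
  linear_combination (norm := module) m • hz

/-- The second integral group homology of the Klein four-group is `ℤ/2`. -/
theorem h2_klein_four_group :
    Nonempty (groupHomologyTwo (ZMod 2 × ZMod 2) ≃+ ZMod 2) := by
  let Z := (barD1 K₄).ker
  let φ : Z →+ ZMod 2 := (barPairing kleinForm).comp Z.subtype
  let z : Z := ⟨single ((1, 0), (0, 1)) 1 - single ((0, 1), (1, 0)) 1,
    barD1_single_sub_single_swap _ _⟩
  have hφz : φ z = 1 := by simp [φ, z]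
  have hsurj : Function.Surjective φ := fun t => by
    obtain ⟨n, rfl⟩ := ZMod.intCast_surjective t
    exact ⟨n • z, by simp [hφz]⟩
  have hker : (barD2 K₄).range.addSubgroupOf Z = φ.ker := by
    ext x
    rw [AddSubgroup.mem_addSubgroupOf, AddMonoidHom.mem_ker]
    refine ⟨fun ⟨y, hy⟩ => ?_, fun hx => ?_⟩
    · simp only [φ, AddMonoidHom.comp_apply, AddSubgroup.coe_subtype, ← hy]
      rw [← AddMonoidHom.comp_apply, barPairing_comp_barD2, AddMonoidHom.zero_apply]
    · rw [← QuotientAddGroup.eq_zero_iff]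
      exact eq_zero_of_barD1Quot_eq_zero_of_barPairingQuot_kleinForm_eq_zero _ x.2 hx
  exact ⟨(QuotientAddGroup.quotientAddEquivOfEq hker).trans
    (QuotientAddGroup.quotientKerEquivOfSurjective φ hsurj)⟩
end
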